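/- arXiv:math/0703902 — 4 statements merged into one kernel-verified Lean document; each statement's English description precedes it below -/
import Mathlib

section
/- Let G be a finite simple graph containing m pairwise vertex-disjoint d-bounded edges. Then a random game on G has no pure Nash equilibrium with probability at least 1 − exp(−m·(1/8)^{2^{2d−2}}). -/
open scoped Classical
open Finset

/-- Best-response tables of a graphical game with binary strategies on vertex set `V`:
player `v`'s table assigns a best response `ω v τ ∈ {0,1}` to each (masked) strategy
profile `τ`. Only the values at profiles vanishing outside the neighborhood of `v` are
ever read, so under the uniform measure the read entries are i.i.d. uniform on `{0,1}`. -/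
abbrev Tables (V : Type) := V → (V → Bool) → Bool

/-- Restriction of a strategy profile to the neighborhood of `v` in `G`
(strategies outside the neighborhood are replaced by `false`). -/
noncomputable def maskN {V : Type} (G : SimpleGraph V) (v : V) (σ : V → Bool) : V → Bool :=
  fun u => if G.Adj v u then σ u else false

/-- `σ` is a pure Nash equilibrium of the game on `G` with tables `ω`:
every player plays a best response to the strategies of its neighbors. -/
def isPNE {V : Type} (G : SimpleGraph V) (ω : Tables V) (σ : V → Bool) : Prop :=
  ∀ v, σ v = ω v (maskN G v σ)

/-- Probability of a table event under the uniform measure on best-response tables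
(the random game on a fixed graph). -/
noncomputable def probT (V : Type) [Fintype V] [DecidableEq V] (A : Tables V → Prop) : ℝ :=
  (∑ ω : Tables V, if A ω then (1 : ℝ) else 0) / (Fintype.card (Tables V) : ℝ)

/-- The degree of a vertex `v` in `G`. -/
noncomputable def degOf {V : Type} [Fintype V] (G : SimpleGraph V) (v : V) : ℕ :=
  (univ.filter fun u => G.Adj v u).card

/-! If an edge `uv` plays matching pennies (on every neighborhood profile, `u`'s table copies
`v`'s strategy and `v`'s table negates `u`'s, or vice versa), no strategy profile is stable on
that edge. With endpoint degrees `a, b ≤ d` this event prescribes `2^a + 2^b` independent fair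
bits in one of two disjoint ways, so it has probability
`2 · 2^-(2^a + 2^b) ≥ (1/8)^(2^(2d-2)) =: p`.
Vertex-disjoint edges read disjoint players' tables, so their events are independent, and none
of them occurs with probability at most `∏ (1 - p) ≤ exp(-m p)`. -/

section Counting

variable {ι T : Type*}

/-- Swapping the coordinates in `s` is a bijection `{B ∧ C} × (ι → T) ≃ {B} × {C}`. -/
lemma card_and_mul_card_eq_of_dependsOn {B C : (ι → T) → Prop} (s : Set ι)
    (hB : DependsOn B s) (hC : DependsOn C sᶜ) :
    Nat.card {ω // B ω ∧ C ω} * Nat.card (ι → T) =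
      Nat.card {ω // B ω} * Nat.card {ω // C ω} := by
  have hB' : ∀ ω τ, B (s.piecewise ω τ) ↔ B ω := fun ω τ =>
    (hB fun i hi => s.piecewise_eq_of_mem _ _ hi).to_iff
  have hC' : ∀ ω τ, C (s.piecewise ω τ) ↔ C τ := fun ω τ =>
    (hC fun i hi => s.piecewise_eq_of_notMem _ _ hi).to_iff
  have swap : ∀ a b : ι → T, s.piecewise (s.piecewise a b) (s.piecewise b a) = a := by
    intro a b; ext i; by_cases hi : i ∈ s <;> simp [hi]
  rw [← Nat.card_prod, ← Nat.card_prod]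
  exact Nat.card_congr
    { toFun := fun x => (⟨s.piecewise x.1.1 x.2, (hB' _ _).2 x.1.2.1⟩,
        ⟨s.piecewise x.2 x.1.1, (hC' _ _).2 x.1.2.2⟩)
      invFun := fun x => (⟨s.piecewise x.1.1 x.2.1, (hB' _ _).2 x.1.2, (hC' _ _).2 x.2.2⟩,
        s.piecewise x.2.1 x.1.1)
      left_inv := fun x => by ext <;> simp only [swap]
      right_inv := fun x => by ext <;> simp only [swap] }

lemma card_forall_mem_eq_mul_pow {D : Type*} [Fintype D] (F : Finset D) (h : D → T) :
    Nat.card {t : D → T // ∀ x ∈ F, t x = h x} * Nat.card T ^ F.card =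
      Nat.card T ^ Nat.card D := by
  have e : {t : D → T // ∀ x ∈ F, t x = h x} ≃ ({x // x ∉ F} → T) :=
    { toFun := fun t x => t.1 x
      invFun := fun g => ⟨fun x => if hx : x ∈ F then h x else g ⟨x, hx⟩,
        fun x hx => by simp [hx]⟩
      left_inv := fun t => by
        ext x; by_cases hx : x ∈ F <;> simp [hx, t.2 x]
      right_inv := fun g => by funext x; simp [x.2] }
  rw [Nat.card_congr e, Nat.card_fun, Nat.card_eq_fintype_card (α := {x // x ∉ F}),
    Fintype.card_subtype_compl, Fintype.card_coe, ← Nat.card_eq_fintype_card,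
    pow_sub_mul_pow _ (Nat.card_eq_fintype_card (α := D) ▸ Finset.card_le_univ F)]

end Counting

section Probability

lemma card_tables_pos {V : Type} [Fintype V] : (0 : ℝ) < Nat.card (Tables V) := by
  exact_mod_cast Nat.card_pos

variable {V : Type} [Fintype V] [DecidableEq V]

lemma probT_eq_card (A : Tables V → Prop) :
    probT V A = Nat.card {ω // A ω} / Nat.card (Tables V) := by
  rw [probT, Finset.sum_boole, Nat.card_eq_fintype_card, Nat.card_eq_fintype_card,
    Fintype.card_subtype]

lemma probT_mono {A B : Tables V → Prop} (h : ∀ ω, A ω → B ω) : probT V A ≤ probT V B := by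
  rw [probT_eq_card, probT_eq_card]
  gcongr
  exact Nat.card_mono (Set.toFinite _) h

lemma probT_le_one (A : Tables V → Prop) : probT V A ≤ 1 := by
  rw [probT_eq_card, div_le_one card_tables_pos]
  exact_mod_cast Finite.card_subtype_le _

lemma probT_not (A : Tables V → Prop) : probT V (fun ω => ¬ A ω) = 1 - probT V A := by
  rw [probT_eq_card, probT_eq_card, Nat.card_eq_fintype_card (α := {ω // ¬ A ω}),
    Fintype.card_subtype_compl, Nat.cast_sub (Fintype.card_subtype_le _), sub_div,
    ← Nat.card_eq_fintype_card, ← Nat.card_eq_fintype_card, div_self card_tables_pos.ne']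

lemma probT_or_of_disjoint {A B : Tables V → Prop} (h : ∀ ω, A ω → ¬ B ω) :
    probT V (fun ω => A ω ∨ B ω) = probT V A + probT V B := by
  simp only [probT, ← add_div, ← Finset.sum_add_distrib]
  congr 1
  refine Finset.sum_congr rfl fun ω _ => ?_
  by_cases hA : A ω <;> simp [hA, h ω]

lemma probT_and_of_dependsOn {B C : Tables V → Prop} (s : Set V)
    (hB : DependsOn B s) (hC : DependsOn C sᶜ) :
    probT V (fun ω => B ω ∧ C ω) = probT V B * probT V C := by
  have hN : (Nat.card (Tables V) : ℝ) ≠ 0 := card_tables_pos.ne'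
  rw [probT_eq_card, probT_eq_card, probT_eq_card, div_mul_div_comm,
    div_eq_div_iff hN (mul_ne_zero hN hN), ← mul_assoc]
  exact_mod_cast congrArg (· * Nat.card (Tables V)) (card_and_mul_card_eq_of_dependsOn s hB hC)

lemma probT_forall_mem_eq (F : Finset (V × (V → Bool))) (h : V × (V → Bool) → Bool) :
    probT V (fun ω => ∀ x ∈ F, ω x.1 x.2 = h x) = (1 / 2 : ℝ) ^ F.card := by
  have hcount := card_forall_mem_eq_mul_pow F h
  have hcurry : Nat.card {ω : Tables V // ∀ x ∈ F, ω x.1 x.2 = h x} =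
      Nat.card {t : V × (V → Bool) → Bool // ∀ x ∈ F, t x = h x} :=
    Nat.card_congr ((Equiv.curry _ _ _).symm.subtypeEquiv fun _ => Iff.rfl)
  have hTables : Nat.card (Tables V) = 2 ^ Nat.card (V × (V → Bool)) := by
    rw [Nat.card_congr (Equiv.curry _ _ _).symm, Nat.card_fun,
      Nat.card_eq_fintype_card (α := Bool), Fintype.card_bool]
  rw [Nat.card_eq_fintype_card (α := Bool), Fintype.card_bool] at hcount
  rw [probT_eq_card, hcurry, div_eq_iff card_tables_pos.ne', hTables, ← hcount]
  push_cast
  rw [mul_left_comm, ← mul_pow]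
  norm_num

lemma probT_forall_mem_eq_prod {ι : Type*} (s : Finset ι) (S : ι → Set V)
    (B : ι → Tables V → Prop) (hS : (s : Set ι).PairwiseDisjoint S)
    (hB : ∀ i ∈ s, DependsOn (B i) (S i)) :
    probT V (fun ω => ∀ i ∈ s, B i ω) = ∏ i ∈ s, probT V (B i) := by
  induction s using Finset.induction_on with
  | empty => simp [probT]
  | @insert j s hj ih =>
    have hrest : DependsOn (fun ω => ∀ i ∈ s, B i ω) (S j)ᶜ := by
      intro ω ω' hωω'
      refine propext (forall₂_congr fun i hi => (hB i (mem_insert_of_mem hi) fun x hx =>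
        hωω' x ?_).to_iff)
      exact Set.disjoint_left.1 (hS (by simp [hi]) (by simp) (by rintro rfl; exact hj hi)) hx
    simp only [Finset.forall_mem_insert, Finset.prod_insert hj]
    rw [probT_and_of_dependsOn (S j) (hB j (mem_insert_self j s)) hrest,
      ih (hS.subset (by simp)) fun i hi => hB i (mem_insert_of_mem hi)]

end Probability

section Game

variable {V : Type} [Fintype V] [DecidableEq V]

/-- The strategy profiles vanishing outside the neighborhood of `u`: the only arguments at
which the table of `u` is ever read. -/
noncomputable def nbhdProfiles (G : SimpleGraph V) (u : V) : Finset (V → Bool) :=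
  univ.image fun g : {x // G.Adj u x} → Bool => fun x => if h : G.Adj u x then g ⟨x, h⟩ else false

lemma maskN_mem_nbhdProfiles (G : SimpleGraph V) (u : V) (σ : V → Bool) :
    maskN G u σ ∈ nbhdProfiles G u :=
  mem_image.2 ⟨fun x => σ x, mem_univ _,
    funext fun x => by by_cases h : G.Adj u x <;> simp [maskN, h]⟩

lemma card_nbhdProfiles (G : SimpleGraph V) (u : V) :
    (nbhdProfiles G u).card = 2 ^ degOf G u := by
  rw [nbhdProfiles, card_image_of_injective _ fun g g' hgg' => funext fun x => by
    simpa [x.2] using congrFun hgg' x.1]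
  simp [degOf, Fintype.card_subtype]

def RespondsBy (G : SimpleGraph V) (ω : Tables V) (u : V) (r : (V → Bool) → Bool) : Prop :=
  ∀ f ∈ nbhdProfiles G u, ω u f = r f

lemma probT_respondsBy (G : SimpleGraph V) (u : V) (r : (V → Bool) → Bool) :
    probT V (RespondsBy G · u r) = (1 / 2 : ℝ) ^ 2 ^ degOf G u := by
  have hevent : (RespondsBy G · u r) =
      fun ω => ∀ x ∈ {u} ×ˢ nbhdProfiles G u, ω x.1 x.2 = r x.2 := by
    funext ω; simp [RespondsBy]
  rw [hevent, probT_forall_mem_eq, card_product, card_singleton, one_mul, card_nbhdProfiles]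

lemma dependsOn_respondsBy (G : SimpleGraph V) (u : V) (r : (V → Bool) → Bool) :
    DependsOn (RespondsBy G · u r) {u} := fun ω ω' h => by
  simp only [RespondsBy, h u rfl]

lemma probT_respondsBy_and (G : SimpleGraph V) {u v : V} (huv : u ≠ v)
    (r s : (V → Bool) → Bool) :
    probT V (fun ω => RespondsBy G ω u r ∧ RespondsBy G ω v s) =
      (1 / 2 : ℝ) ^ 2 ^ degOf G u * (1 / 2 : ℝ) ^ 2 ^ degOf G v := by
  rw [probT_and_of_dependsOn {u} (dependsOn_respondsBy G u r)
    ((dependsOn_respondsBy G v s).mono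
      (Set.singleton_subset_iff.2 (Set.mem_compl_singleton_iff.2 huv.symm))),
    probT_respondsBy, probT_respondsBy]

def MatchingPennies (G : SimpleGraph V) (ω : Tables V) (e : V × V) : Prop :=
  RespondsBy G ω e.1 (· e.2) ∧ RespondsBy G ω e.2 (! · e.1) ∨
    RespondsBy G ω e.1 (! · e.2) ∧ RespondsBy G ω e.2 (· e.1)

lemma not_isPNE_of_matchingPennies {G : SimpleGraph V} {ω : Tables V} {e : V × V}
    (hadj : G.Adj e.1 e.2) (he : MatchingPennies G ω e) (σ : V → Bool) : ¬ isPNE G ω σ := by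
  intro hσ
  have m1 := maskN_mem_nbhdProfiles G e.1 σ
  have m2 := maskN_mem_nbhdProfiles G e.2 σ
  have a1 : maskN G e.1 σ e.2 = σ e.2 := if_pos hadj
  have a2 : maskN G e.2 σ e.1 = σ e.1 := if_pos hadj.symm
  rcases he with ⟨r1, r2⟩ | ⟨r1, r2⟩ <;>
  · have h1 := (hσ e.1).trans (r1 _ m1)
    have h2 := (hσ e.2).trans (r2 _ m2)
    simp only [a1, a2] at h1 h2
    revert h1 h2
    cases σ e.1 <;> cases σ e.2 <;> decide

lemma dependsOn_matchingPennies (G : SimpleGraph V) (e : V × V) :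
    DependsOn (MatchingPennies G · e) {e.1, e.2} := fun ω ω' h => by
  simp only [MatchingPennies, RespondsBy, h e.1 (by simp), h e.2 (by simp)]

lemma probT_matchingPennies {G : SimpleGraph V} {e : V × V} (hadj : G.Adj e.1 e.2) :
    probT V (MatchingPennies G · e) =
      2 * ((1 / 2 : ℝ) ^ 2 ^ degOf G e.1 * (1 / 2 : ℝ) ^ 2 ^ degOf G e.2) := by
  have hf := maskN_mem_nbhdProfiles G e.1 fun _ => false
  simp only [MatchingPennies]
  rw [probT_or_of_disjoint fun ω h h' => by simpa using (h.1 _ hf).symm.trans (h'.1 _ hf),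
    probT_respondsBy_and G hadj.ne, probT_respondsBy_and G hadj.ne]
  ring

end Game

lemma one_le_degOf {V : Type} [Fintype V] {G : SimpleGraph V} {u v : V} (h : G.Adj u v) :
    1 ≤ degOf G u :=
  card_pos.2 ⟨v, by simp [h]⟩

lemma two_pow_add_two_pow_le {d a b : ℕ} (hd : 1 ≤ d) (ha : a ≤ d) (hb : b ≤ d) :
    2 ^ a + 2 ^ b ≤ 3 * 2 ^ (2 * d - 2) + 1 := by
  have ha' := Nat.pow_le_pow_right two_pos ha
  have hb' := Nat.pow_le_pow_right two_pos hb
  rcases hd.eq_or_lt with rfl | hd2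
  · norm_num at ha' hb' ⊢; omega
  · have := Nat.pow_le_pow_right two_pos (show d ≤ 2 * d - 2 by omega)
    omega

lemma one_eighth_rpow_le {d a b : ℕ} (hd : 1 ≤ d) (ha : a ≤ d) (hb : b ≤ d) :
    (1 / 8 : ℝ) ^ ((2 : ℝ) ^ (2 * (d : ℝ) - 2)) ≤
      2 * ((1 / 2 : ℝ) ^ 2 ^ a * (1 / 2 : ℝ) ^ 2 ^ b) := by
  have hexp : (2 : ℝ) ^ (2 * (d : ℝ) - 2) = ((2 ^ (2 * d - 2) : ℕ) : ℝ) := by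
    rw [show 2 * (d : ℝ) - 2 = ((2 * d - 2 : ℕ) : ℝ) by
      push_cast [Nat.cast_sub (show 2 ≤ 2 * d by omega)]; ring, Real.rpow_natCast]
    push_cast; rfl
  obtain ⟨k, hk⟩ : ∃ k, 2 ^ a + 2 ^ b = k + 1 :=
    ⟨_, (Nat.succ_pred_eq_of_pos (by positivity)).symm⟩
  rw [hexp, Real.rpow_natCast, show (1 / 8 : ℝ) = (1 / 2) ^ 3 by norm_num, ← pow_mul, ← pow_add,
    hk, pow_succ]
  calc (1 / 2 : ℝ) ^ (3 * 2 ^ (2 * d - 2))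
      ≤ (1 / 2) ^ k := pow_le_pow_of_le_one (by norm_num) (by norm_num)
        (by have := two_pow_add_two_pow_le hd ha hb; omega)
    _ = 2 * ((1 / 2) ^ k * (1 / 2)) := by ring

lemma prod_one_sub_le_exp_neg {ι : Type*} (s : Finset ι) {q : ι → ℝ} {p : ℝ}
    (hq : ∀ i ∈ s, q i ≤ 1) (hp : ∀ i ∈ s, p ≤ q i) :
    ∏ i ∈ s, (1 - q i) ≤ Real.exp (-(s.card * p)) :=
  calc ∏ i ∈ s, (1 - q i)
      ≤ ∏ i ∈ s, Real.exp (-q i) := prod_le_prod (fun i hi => sub_nonneg.2 (hq i hi))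
        fun i _ => by linarith [Real.add_one_le_exp (-q i)]
    _ = Real.exp (-∑ i ∈ s, q i) := by rw [← Real.exp_sum, sum_neg_distrib]
    _ ≤ Real.exp (-(s.card * p)) :=
        Real.exp_le_exp.2 (neg_le_neg (by simpa using card_nsmul_le_sum s q p hp))

/-- **Vertex-disjoint `d`-bounded edges.** If `G` contains `m` pairwise vertex-disjoint
edges whose endpoints all have degree at most `d`, then a random game on `G` has no pure
Nash equilibrium with probability at least `1 - exp(-m (1/8)^{2^{2d-2}})`. -/
theorem stmt7 {V : Type} [Fintype V] [DecidableEq V] (G : SimpleGraph V)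
    (d m : ℕ) (E' : Finset (V × V)) (hcard : E'.card = m)
    (hedge : ∀ e ∈ E', G.Adj e.1 e.2 ∧ degOf G e.1 ≤ d ∧ degOf G e.2 ≤ d)
    (hdisj : ∀ e ∈ E', ∀ f ∈ E', e ≠ f →
      e.1 ≠ f.1 ∧ e.1 ≠ f.2 ∧ e.2 ≠ f.1 ∧ e.2 ≠ f.2) :
    1 - Real.exp (-((m : ℝ) * (1 / 8 : ℝ) ^ ((2 : ℝ) ^ (2 * (d : ℝ) - 2)))) ≤
      probT V (fun ω => ¬ ∃ σ, isPNE G ω σ) := by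
  have hpennies : ∀ e ∈ E', (1 / 8 : ℝ) ^ ((2 : ℝ) ^ (2 * (d : ℝ) - 2)) ≤
      probT V (MatchingPennies G · e) := fun e he => by
    obtain ⟨hadj, hd1, hd2⟩ := hedge e he
    rw [probT_matchingPennies hadj]
    exact one_eighth_rpow_le ((one_le_degOf hadj).trans hd1) hd1 hd2
  have hdisjoint : (E' : Set (V × V)).PairwiseDisjoint fun e => ({e.1, e.2} : Set V) :=
    fun e he f hf hef => by
      obtain ⟨h11, h12, h21, h22⟩ := hdisj e he f hf hef
      simp [Function.onFun, h11.symm, h12.symm, h21.symm, h22.symm]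
  have hnone : probT V (fun ω => ∀ e ∈ E', ¬ MatchingPennies G ω e) =
      ∏ e ∈ E', (1 - probT V (MatchingPennies G · e)) := by
    rw [probT_forall_mem_eq_prod E' _ _ hdisjoint fun e _ ω ω' h =>
      congrArg Not (dependsOn_matchingPennies G e h)]
    simp only [probT_not]
  calc 1 - Real.exp (-((m : ℝ) * (1 / 8 : ℝ) ^ ((2 : ℝ) ^ (2 * (d : ℝ) - 2))))
      ≤ 1 - ∏ e ∈ E', (1 - probT V (MatchingPennies G · e)) := by
        rw [← hcard]
        gcongr
        exact prod_one_sub_le_exp_neg E' (fun e _ => probT_le_one _) hpennies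
    _ = probT V (fun ω => ∃ e ∈ E', MatchingPennies G ω e) := by
        rw [← hnone, ← probT_not]
        simp only [not_forall, not_not, exists_prop]
    _ ≤ probT V (fun ω => ¬ ∃ σ, isPNE G ω σ) := probT_mono fun ω ⟨e, he, hω⟩ ⟨σ, hσ⟩ =>
        not_isPNE_of_matchingPennies (hedge e he).1 hω σ hσ
end

section
/- Let G be a finite simple graph containing m d-bounded edges (not necessarily disjoint), where d ≥ 1. Then a random game on G has no pure Nash equilibrium with probability at least 1 − exp(−(m/(2d))·(1/8)^{2^{2d−2}}). -/
open scoped Classical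
open Finset

/-! ### Auxiliary counting lemmas -/

lemma count_agree {α : Type} [Fintype α] (S : Finset α) (h : α → Bool) :
    Fintype.card {f : α → Bool // ∀ x ∈ S, f x = h x}
      = 2 ^ (Fintype.card α - S.card) := by
  classical
  have e : {f : α → Bool // ∀ x ∈ S, f x = h x} ≃ ({x : α // x ∉ S} → Bool) :=
    { toFun := fun f x => f.1 x.1
      invFun := fun g => ⟨fun x => if hx : x ∈ S then h x else g ⟨x, hx⟩, by
        intro x hx; simp [hx]⟩
      left_inv := by
        rintro ⟨f, hf⟩
        ext x
        by_cases hx : x ∈ S <;> simp [hx, hf]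
      right_inv := by
        intro g; ext x; simp [x.2] }
  rw [Fintype.card_congr e, Fintype.card_fun, Fintype.card_bool]
  rw [Fintype.card_subtype_compl]
  congr 2
  exact Fintype.card_coe S

lemma card_pair_event {α : Type} [Fintype α] (S T : Finset α) (h1 h2 : α → Bool) :
    Fintype.card {fg : (α → Bool) × (α → Bool) //
        (∀ x ∈ S, fg.1 x = h1 x) ∧ (∀ x ∈ T, fg.2 x = h2 x)}
      = 2 ^ (Fintype.card α - S.card) * 2 ^ (Fintype.card α - T.card) := by
  classical
  rw [Fintype.card_congr (Equiv.subtypeProdEquivProd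
    (p := fun f : α → Bool => ∀ x ∈ S, f x = h1 x)
    (q := fun g : α → Bool => ∀ x ∈ T, g x = h2 x)),
    Fintype.card_prod, count_agree, count_agree]

lemma card_or_disjoint {β : Type} [Fintype β] (p q : β → Prop)
    (h : ∀ b, p b → q b → False) :
    Fintype.card {b : β // p b ∨ q b}
      = Fintype.card {b // p b} + Fintype.card {b // q b} := by
  classical
  rw [Fintype.card_congr (subtypeOrEquiv p q (by
    rw [disjoint_iff_inf_le]; intro b hb; exact h b hb.1 hb.2)), Fintype.card_sum]

lemma natcard_agree {α : Type} [Fintype α] (S : Finset α) (h : α → Bool) :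
    Nat.card {f : α → Bool // ∀ x ∈ S, f x = h x}
      = 2 ^ (Nat.card α - S.card) := by
  classical
  simp only [Nat.card_eq_fintype_card]
  exact count_agree S h

lemma natcard_pair_event {α : Type} [Fintype α] (S T : Finset α) (h1 h2 : α → Bool) :
    Nat.card {fg : (α → Bool) × (α → Bool) //
        (∀ x ∈ S, fg.1 x = h1 x) ∧ (∀ x ∈ T, fg.2 x = h2 x)}
      = 2 ^ (Nat.card α - S.card) * 2 ^ (Nat.card α - T.card) := by
  classical
  rw [Nat.card_congr (Equiv.subtypeProdEquivProd
    (p := fun f : α → Bool => ∀ x ∈ S, f x = h1 x)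
    (q := fun g : α → Bool => ∀ x ∈ T, g x = h2 x)),
    Nat.card_prod, natcard_agree, natcard_agree]

lemma natcard_pairs {α : Type} [Fintype α] (S T : Finset α) (a b c e : α → Bool)
    (x0 : α) (hx0 : x0 ∈ S) (hac : a x0 ≠ c x0) :
    Nat.card {fg : (α → Bool) × (α → Bool) //
        ((∀ x ∈ S, fg.1 x = a x) ∧ (∀ x ∈ T, fg.2 x = b x)) ∨
        ((∀ x ∈ S, fg.1 x = c x) ∧ (∀ x ∈ T, fg.2 x = e x))}
      = 2 ^ (Nat.card α - S.card) * 2 ^ (Nat.card α - T.card)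
        + 2 ^ (Nat.card α - S.card) * 2 ^ (Nat.card α - T.card) := by
  classical
  rw [Nat.card_congr (subtypeOrEquiv
      (fun fg : (α → Bool) × (α → Bool) =>
        (∀ x ∈ S, fg.1 x = a x) ∧ (∀ x ∈ T, fg.2 x = b x))
      (fun fg => (∀ x ∈ S, fg.1 x = c x) ∧ (∀ x ∈ T, fg.2 x = e x))
      (by
        rw [disjoint_iff_inf_le]
        rintro fg ⟨⟨hl, -⟩, ⟨hr, -⟩⟩
        exact hac (by rw [← hl x0 hx0, hr x0 hx0]))),
    Nat.card_sum, natcard_pair_event, natcard_pair_event]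

noncomputable def splitTwo {ι F : Type} {u v : ι} (_huv : u ≠ v) :
    (ι → F) ≃ F × F × ({w : ι // w ≠ u ∧ w ≠ v} → F) where
  toFun ω := (ω u, ω v, fun w => ω w.1)
  invFun x := fun w =>
    if h1 : w = u then x.1 else if h2 : w = v then x.2.1 else x.2.2 ⟨w, h1, h2⟩
  left_inv ω := by
    funext w
    by_cases h1 : w = u
    · subst h1; simp
    · by_cases h2 : w = v
      · subst h2; simp [h1]
      · simp [h1, h2]
  right_inv x := by
    obtain ⟨f, g, ρ⟩ := x
    refine Prod.ext ?_ (Prod.ext ?_ ?_)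
    · simp
    · simp [_huv.symm]
    · funext w
      simp [w.2.1, w.2.2]

lemma card_ne_two {ι : Type} [Fintype ι] [DecidableEq ι] {u v : ι} (huv : u ≠ v) :
    Fintype.card {w : ι // w ≠ u ∧ w ≠ v} = Fintype.card ι - 2 := by
  rw [Fintype.card_subtype]
  have : (univ.filter fun w : ι => w ≠ u ∧ w ≠ v) = univ \ {u, v} := by
    ext w; simp [and_comm]
  rw [this, card_sdiff_of_subset (by simp)]
  simp [card_insert_of_notMem, huv, Finset.card_univ]

lemma main_count (n : ℕ) : ∀ {ι F : Type} [Fintype ι] [DecidableEq ι] [Fintype F]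
    (C : ι × ι → F → F → Prop) (P : Finset (ι × ι)), P.card = n →
    (∀ p ∈ P, p.1 ≠ p.2) →
    (∀ p ∈ P, ∀ q ∈ P, p ≠ q → p.1 ≠ q.1 ∧ p.1 ≠ q.2 ∧ p.2 ≠ q.1 ∧ p.2 ≠ q.2) →
    Fintype.card {ω : ι → F // ∀ p ∈ P, C p (ω p.1) (ω p.2)} * (Fintype.card F) ^ (2 * P.card)
      = (Fintype.card F) ^ (Fintype.card ι)
        * ∏ p ∈ P, Fintype.card {fg : F × F // C p fg.1 fg.2} := by
  induction n with
  | zero =>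
    intro ι F _ _ _ C P hcard hne hdis
    rw [Finset.card_eq_zero] at hcard
    subst hcard
    simp only [Finset.notMem_empty, false_implies, implies_true, Finset.prod_empty,
      Finset.card_empty, mul_zero, pow_zero, mul_one]
    rw [Fintype.card_congr (Equiv.subtypeUnivEquiv (fun _ => trivial)), Fintype.card_fun]
  | succ n ih =>
    intro ι F _ _ _ C P hcard hne hdis
    have hP0 : P.Nonempty := by
      rw [← Finset.card_pos, hcard]; omega
    obtain ⟨q, hq⟩ := hP0
    obtain ⟨u, v⟩ := q
    have huv : u ≠ v := hne _ hq
    set P' : Finset (ι × ι) := P.erase (u, v) with hP'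
    have hcard' : P'.card = n := by
      rw [hP', Finset.card_erase_of_mem hq, hcard]
      omega
    have hmemP' : ∀ p ∈ P', p ∈ P ∧ p ≠ (u, v) := by
      intro p hp; exact ⟨Finset.mem_of_mem_erase hp, Finset.ne_of_mem_erase hp⟩
    have havoid : ∀ p ∈ P', p.1 ≠ u ∧ p.1 ≠ v ∧ p.2 ≠ u ∧ p.2 ≠ v := by
      intro p hp
      obtain ⟨hpP, hpq⟩ := hmemP' p hp
      have h := hdis p hpP (u, v) hq hpq
      exact ⟨h.1, h.2.1, h.2.2.1, h.2.2.2⟩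
    set ι' := {w : ι // w ≠ u ∧ w ≠ v} with hι'
    set P'' : Finset (ι' × ι') := P'.attach.image
      (fun p => ((⟨p.1.1, (havoid p.1 p.2).1, (havoid p.1 p.2).2.1⟩ : ι'),
                 (⟨p.1.2, (havoid p.1 p.2).2.2.1, (havoid p.1 p.2).2.2.2⟩ : ι'))) with hP''
    have hinj : ∀ p ∈ P'.attach, ∀ q ∈ P'.attach,
        ((⟨p.1.1, (havoid p.1 p.2).1, (havoid p.1 p.2).2.1⟩ : ι'),
         (⟨p.1.2, (havoid p.1 p.2).2.2.1, (havoid p.1 p.2).2.2.2⟩ : ι'))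
        = ((⟨q.1.1, (havoid q.1 q.2).1, (havoid q.1 q.2).2.1⟩ : ι'),
           (⟨q.1.2, (havoid q.1 q.2).2.2.1, (havoid q.1 q.2).2.2.2⟩ : ι')) → p = q := by
      intro p _ q _ h
      have h1 : p.1.1 = q.1.1 := congrArg (fun x => x.1.1) h
      have h2 : p.1.2 = q.1.2 := congrArg (fun x => x.2.1) h
      exact Subtype.ext (Prod.ext h1 h2)
    have hcard'' : P''.card = n := by
      rw [hP'', Finset.card_image_of_injOn hinj, Finset.card_attach, hcard']
    set C' : ι' × ι' → F → F → Prop := fun p f g => C (p.1.1, p.2.1) f g with hC'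
    have hmem'' : ∀ p'' : ι' × ι', p'' ∈ P'' ↔ (p''.1.1, p''.2.1) ∈ P' := by
      intro p''
      constructor
      · intro h
        rw [hP''] at h
        obtain ⟨p, _, rfl⟩ := Finset.mem_image.mp h
        simpa using p.2
      · intro h
        rw [hP'']
        refine Finset.mem_image.mpr ⟨⟨(p''.1.1, p''.2.1), h⟩, Finset.mem_attach _ _, ?_⟩
        refine Prod.ext (Subtype.ext rfl) (Subtype.ext rfl)
    have hiff : ∀ ω : ι → F,
        (∀ p ∈ P, C p (ω p.1) (ω p.2)) ↔
          (C (u, v) (ω u) (ω v) ∧ ∀ p'' ∈ P'', C' p'' (ω p''.1.1) (ω p''.2.1)) := by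
      intro ω
      constructor
      · intro h
        refine ⟨h _ hq, ?_⟩
        intro p'' hp''
        have := h _ (Finset.mem_of_mem_erase ((hmem'' p'').mp hp''))
        simpa [hC'] using this
      · rintro ⟨h1, h2⟩ p hp
        by_cases hpq : p = (u, v)
        · subst hpq; exact h1
        · have hp' : p ∈ P' := Finset.mem_erase.mpr ⟨hpq, hp⟩
          have hm : ((⟨p.1, (havoid p hp').1, (havoid p hp').2.1⟩ : ι'),
                     (⟨p.2, (havoid p hp').2.2.1, (havoid p hp').2.2.2⟩ : ι')) ∈ P'' := by
            rw [hmem'']; simpa using hp'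
          have := h2 _ hm
          simpa [hC'] using this
    have hsplit : Fintype.card {ω : ι → F // ∀ p ∈ P, C p (ω p.1) (ω p.2)}
        = Fintype.card {fg : F × F // C (u, v) fg.1 fg.2}
          * Fintype.card {ρ : ι' → F // ∀ p'' ∈ P'', C' p'' (ρ p''.1) (ρ p''.2)} := by
      rw [← Fintype.card_prod]
      apply Fintype.card_congr
      have e1 : {ω : ι → F // ∀ p ∈ P, C p (ω p.1) (ω p.2)} ≃
          {x : F × F × (ι' → F) //
            C (u, v) x.1 x.2.1 ∧ ∀ p'' ∈ P'', C' p'' (x.2.2 p''.1) (x.2.2 p''.2)} :=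
        Equiv.subtypeEquiv (splitTwo huv) (fun ω => by
          simp only [splitTwo, Equiv.coe_fn_mk]; exact hiff ω)
      have e2 : {x : F × F × (ι' → F) //
            C (u, v) x.1 x.2.1 ∧ ∀ p'' ∈ P'', C' p'' (x.2.2 p''.1) (x.2.2 p''.2)} ≃
          {y : (F × F) × (ι' → F) //
            (fun fg : F × F => C (u, v) fg.1 fg.2) y.1 ∧
            (fun ρ : ι' → F => ∀ p'' ∈ P'', C' p'' (ρ p''.1) (ρ p''.2)) y.2} :=
        Equiv.subtypeEquiv (Equiv.prodAssoc F F (ι' → F)).symm (fun x => Iff.rfl)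
      exact e1.trans (e2.trans (Equiv.subtypeProdEquivProd
        (p := fun fg : F × F => C (u, v) fg.1 fg.2)
        (q := fun ρ : ι' → F => ∀ p'' ∈ P'', C' p'' (ρ p''.1) (ρ p''.2))))
    have hci : 2 ≤ Fintype.card ι := by
      have : Nontrivial ι := ⟨⟨u, v, huv⟩⟩
      exact Fintype.one_lt_card
    have hIH := ih (ι := ι') C' P'' hcard''
      (by
        intro p'' hp''
        have hp' : (p''.1.1, p''.2.1) ∈ P' := (hmem'' p'').mp hp''
        have := hne _ (Finset.mem_of_mem_erase hp')
        intro hcon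
        exact this (by simpa using congrArg Subtype.val hcon))
      (by
        intro p'' hp'' q'' hq'' hpq
        have hp' : (p''.1.1, p''.2.1) ∈ P' := (hmem'' p'').mp hp''
        have hq' : (q''.1.1, q''.2.1) ∈ P' := (hmem'' q'').mp hq''
        have hne2 : (p''.1.1, p''.2.1) ≠ (q''.1.1, q''.2.1) := by
          intro hcon
          apply hpq
          have h1 : p''.1.1 = q''.1.1 := congrArg Prod.fst hcon
          have h2 : p''.2.1 = q''.2.1 := congrArg Prod.snd hcon
          exact Prod.ext (Subtype.ext h1) (Subtype.ext h2)
        have := hdis _ (Finset.mem_of_mem_erase hp') _ (Finset.mem_of_mem_erase hq') hne2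
        exact ⟨fun h => this.1 (congrArg Subtype.val h),
               fun h => this.2.1 (congrArg Subtype.val h),
               fun h => this.2.2.1 (congrArg Subtype.val h),
               fun h => this.2.2.2 (congrArg Subtype.val h)⟩)
    have hprod : (∏ p'' ∈ P'', Fintype.card {fg : F × F // C' p'' fg.1 fg.2})
        = ∏ p ∈ P', Fintype.card {fg : F × F // C p fg.1 fg.2} := by
      rw [hP'', Finset.prod_image hinj]
      rw [← Finset.prod_attach P' (fun p => Fintype.card {fg : F × F // C p fg.1 fg.2})]
    have hprodP : (∏ p ∈ P, Fintype.card {fg : F × F // C p fg.1 fg.2})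
        = Fintype.card {fg : F × F // C (u, v) fg.1 fg.2}
          * ∏ p ∈ P', Fintype.card {fg : F × F // C p fg.1 fg.2} := by
      rw [hP', ← Finset.mul_prod_erase P _ hq]
    have hcι' : Fintype.card ι' = Fintype.card ι - 2 := card_ne_two huv
    rw [hsplit, hcard, hprodP, ← hprod]
    rw [hcι'] at hIH
    have hpow : (Fintype.card F) ^ (2 * (n + 1))
        = (Fintype.card F) ^ (2 * n) * (Fintype.card F) ^ 2 := by
      rw [← pow_add]; ring_nf
    rw [hpow]
    calc Fintype.card {fg : F × F // C (u, v) fg.1 fg.2}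
          * Fintype.card {ρ : ι' → F // ∀ p'' ∈ P'', C' p'' (ρ p''.1) (ρ p''.2)}
          * ((Fintype.card F) ^ (2 * n) * (Fintype.card F) ^ 2)
        = Fintype.card {fg : F × F // C (u, v) fg.1 fg.2}
          * (Fintype.card {ρ : ι' → F // ∀ p'' ∈ P'', C' p'' (ρ p''.1) (ρ p''.2)}
            * (Fintype.card F) ^ (2 * P''.card)) * (Fintype.card F) ^ 2 := by
          rw [hcard'']; ring
      _ = Fintype.card {fg : F × F // C (u, v) fg.1 fg.2}
          * ((Fintype.card F) ^ (Fintype.card ι - 2)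
            * ∏ p'' ∈ P'', Fintype.card {fg : F × F // C' p'' fg.1 fg.2})
          * (Fintype.card F) ^ 2 := by rw [hIH]
      _ = (Fintype.card F) ^ (Fintype.card ι - 2) * (Fintype.card F) ^ 2
          * (Fintype.card {fg : F × F // C (u, v) fg.1 fg.2}
            * ∏ p'' ∈ P'', Fintype.card {fg : F × F // C' p'' fg.1 fg.2}) := by ring
      _ = (Fintype.card F) ^ (Fintype.card ι)
          * (Fintype.card {fg : F × F // C (u, v) fg.1 fg.2}
            * ∏ p'' ∈ P'', Fintype.card {fg : F × F // C' p'' fg.1 fg.2}) := by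
          rw [← pow_add, Nat.sub_add_cancel hci]
      _ = _ := by ring

lemma main_count' {ι F : Type} [Fintype ι] [DecidableEq ι] [Fintype F]
    (C : ι × ι → F → F → Prop) (P : Finset (ι × ι))
    (hne : ∀ p ∈ P, p.1 ≠ p.2)
    (hdis : ∀ p ∈ P, ∀ q ∈ P, p ≠ q → p.1 ≠ q.1 ∧ p.1 ≠ q.2 ∧ p.2 ≠ q.1 ∧ p.2 ≠ q.2) :
    Nat.card {ω : ι → F // ∀ p ∈ P, C p (ω p.1) (ω p.2)} * (Nat.card F) ^ (2 * P.card)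
      = (Nat.card F) ^ (Nat.card ι)
        * ∏ p ∈ P, Nat.card {fg : F × F // C p fg.1 fg.2} := by
  simp only [Nat.card_eq_fintype_card]
  exact main_count P.card C P rfl hne hdis

/-! ### graph lemmas -/

lemma degOf_eq_degree {V : Type} [Fintype V] [DecidableEq V] (G : SimpleGraph V) (v : V) :
    degOf G v = G.degree v := by
  classical
  rw [degOf, SimpleGraph.degree, SimpleGraph.neighborFinset_eq_filter]

lemma greedy {V : Type} [Fintype V] [DecidableEq V] (G : SimpleGraph V) (d : ℕ) :
    ∀ n (F : Finset (Sym2 V)), F.card ≤ n →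
    (∀ e ∈ F, e ∈ G.edgeSet ∧ ∀ v ∈ e, degOf G v ≤ d) →
    ∃ P : Finset (V × V),
      F.card ≤ P.card * (2 * d) ∧
      (∀ p ∈ P, G.Adj p.1 p.2 ∧ degOf G p.1 ≤ d ∧ degOf G p.2 ≤ d) ∧
      (∀ p ∈ P, p.1 ≠ p.2) ∧
      (∀ p ∈ P, ∀ q ∈ P, p ≠ q → p.1 ≠ q.1 ∧ p.1 ≠ q.2 ∧ p.2 ≠ q.1 ∧ p.2 ≠ q.2) ∧
      (∀ p ∈ P, ∃ e ∈ F, p.1 ∈ e ∧ p.2 ∈ e) := by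
  intro n
  induction n with
  | zero =>
    intro F hF _
    refine ⟨∅, ?_⟩
    simp at hF ⊢
    exact hF
  | succ n ih =>
    intro F hF hedge
    rcases Finset.eq_empty_or_nonempty F with rfl | ⟨e, he⟩
    · exact ⟨∅, by simp⟩
    obtain ⟨⟨u, v⟩, rfl⟩ := Quot.exists_rep e
    have heE : s(u, v) ∈ G.edgeSet := (hedge _ he).1
    have hadj : G.Adj u v := heE
    have hu : u ∈ s(u, v) := by simp
    have hv : v ∈ s(u, v) := by simp
    have hdu : degOf G u ≤ d := (hedge _ he).2 u hu
    have hdv : degOf G v ≤ d := (hedge _ he).2 v hv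
    set F' : Finset (Sym2 V) := F.filter (fun e' => ¬ (u ∈ e' ∨ v ∈ e')) with hF'
    have hsubF : F' ⊆ F := Finset.filter_subset _ _
    have hF'le : F'.card ≤ n := by
      have hsub : F' ⊆ F.erase s(u, v) := by
        intro e' he'
        rw [Finset.mem_erase]
        have := Finset.mem_filter.mp he'
        refine ⟨?_, this.1⟩
        intro hcon
        exact this.2 (by subst hcon; left; exact hu)
      calc F'.card ≤ (F.erase s(u, v)).card := Finset.card_le_card hsub
        _ = F.card - 1 := Finset.card_erase_of_mem he
        _ ≤ n := by omega
    have hrem : (F.filter (fun e' => u ∈ e' ∨ v ∈ e')).card ≤ 2 * d := by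
      have hsub : F.filter (fun e' => u ∈ e' ∨ v ∈ e')
          ⊆ G.incidenceFinset u ∪ G.incidenceFinset v := by
        intro e' he'
        obtain ⟨heF, hmem⟩ := Finset.mem_filter.mp he'
        have heE' : e' ∈ G.edgeSet := (hedge _ heF).1
        rcases hmem with h | h
        · exact Finset.mem_union_left _ (by
            rw [SimpleGraph.mem_incidenceFinset]; exact ⟨heE', h⟩)
        · exact Finset.mem_union_right _ (by
            rw [SimpleGraph.mem_incidenceFinset]; exact ⟨heE', h⟩)
      calc (F.filter (fun e' => u ∈ e' ∨ v ∈ e')).card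
          ≤ (G.incidenceFinset u ∪ G.incidenceFinset v).card := Finset.card_le_card hsub
        _ ≤ (G.incidenceFinset u).card + (G.incidenceFinset v).card := Finset.card_union_le _ _
        _ = G.degree u + G.degree v := by
            rw [SimpleGraph.card_incidenceFinset_eq_degree,
              SimpleGraph.card_incidenceFinset_eq_degree]
        _ ≤ d + d := by
            rw [← degOf_eq_degree, ← degOf_eq_degree]; omega
        _ = 2 * d := by ring
    have hsplitc : F.card ≤ F'.card + 2 * d := by
      have := Finset.card_filter_add_card_filter_not
        (s := F) (p := fun e' => u ∈ e' ∨ v ∈ e')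
      rw [← hF'] at this
      omega
    obtain ⟨P', hc', hprop', hne', hdis', hwit'⟩ := ih F' hF'le
      (fun e' he' => hedge e' (hsubF he'))
    have havoid : ∀ p ∈ P', p.1 ≠ u ∧ p.1 ≠ v ∧ p.2 ≠ u ∧ p.2 ≠ v := by
      intro p hp
      obtain ⟨e', he', h1, h2⟩ := hwit' p hp
      have := Finset.mem_filter.mp he'
      push_neg at this
      refine ⟨?_, ?_, ?_, ?_⟩ <;> rintro rfl
      · exact (this.2.1 h1)
      · exact (this.2.2 h1)
      · exact (this.2.1 h2)
      · exact (this.2.2 h2)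
    have hnotmem : (u, v) ∉ P' := by
      intro h
      exact (havoid _ h).1 rfl
    refine ⟨insert (u, v) P', ?_, ?_, ?_, ?_, ?_⟩
    · rw [Finset.card_insert_of_notMem hnotmem]
      calc F.card ≤ F'.card + 2 * d := hsplitc
        _ ≤ P'.card * (2 * d) + 2 * d := by omega
        _ = (P'.card + 1) * (2 * d) := by ring
    · intro p hp
      rcases Finset.mem_insert.mp hp with rfl | hp'
      · exact ⟨hadj, hdu, hdv⟩
      · exact hprop' p hp'
    · intro p hp
      rcases Finset.mem_insert.mp hp with rfl | hp'
      · exact G.ne_of_adj hadj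
      · exact hne' p hp'
    · intro p hp q hq hpq
      rcases Finset.mem_insert.mp hp with rfl | hp' <;>
        rcases Finset.mem_insert.mp hq with rfl | hq'
      · exact absurd rfl hpq
      · have h := havoid q hq'
        exact ⟨fun h' => h.1 h'.symm, fun h' => h.2.2.1 h'.symm,
          fun h' => h.2.1 h'.symm, fun h' => h.2.2.2 h'.symm⟩
      · have h := havoid p hp'
        exact ⟨h.1, h.2.1, h.2.2.1, h.2.2.2⟩
      · exact hdis' p hp' q hq' hpq
    · intro p hp
      rcases Finset.mem_insert.mp hp with rfl | hp'
      · exact ⟨s(u, v), he, hu, hv⟩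
      · obtain ⟨e', he', h1, h2⟩ := hwit' p hp'
        exact ⟨e', hsubF he', h1, h2⟩

/-! ### neighborhood profiles and the per-edge event -/

noncomputable def NbhdS {V : Type} [Fintype V] (G : SimpleGraph V) (u : V) :
    Finset (V → Bool) :=
  univ.filter (fun x => ∀ w, ¬ G.Adj u w → x w = false)

lemma card_NbhdS {V : Type} [Fintype V] [DecidableEq V] (G : SimpleGraph V) (u : V) :
    (NbhdS G u).card = 2 ^ (degOf G u) := by
  classical
  rw [← Fintype.card_coe]
  have e : {x // x ∈ NbhdS G u} ≃ ({w : V // G.Adj u w} → Bool) :=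
    { toFun := fun x w => x.1 w.1
      invFun := fun g => ⟨fun w => if h : G.Adj u w then g ⟨w, h⟩ else false, by
        simp only [NbhdS, Finset.mem_filter, Finset.mem_univ, true_and]
        intro w hw; simp [hw]⟩
      left_inv := by
        rintro ⟨x, hx⟩
        simp only [NbhdS, Finset.mem_filter, Finset.mem_univ, true_and] at hx
        ext w
        by_cases h : G.Adj u w
        · simp [h]
        · simp [h, hx w h]
      right_inv := by
        intro g; ext w; simp [w.2] }
  rw [Fintype.card_congr e, Fintype.card_fun, Fintype.card_bool]
  congr 1
  rw [degOf, Fintype.card_subtype]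

lemma nbhd_card_le {V : Type} [Fintype V] (G : SimpleGraph V) (u : V) :
    (NbhdS G u).card ≤ Nat.card (V → Bool) := by
  rw [Nat.card_eq_fintype_card]
  exact le_trans (Finset.card_le_univ _) (le_of_eq Finset.card_univ)

def Bev {V : Type} [Fintype V] (G : SimpleGraph V) (u v : V)
    (f g : (V → Bool) → Bool) : Prop :=
  ((∀ x ∈ NbhdS G u, f x = !(x v)) ∧ (∀ x ∈ NbhdS G v, g x = x u)) ∨
  ((∀ x ∈ NbhdS G u, f x = x v) ∧ (∀ x ∈ NbhdS G v, g x = !(x u)))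

lemma Bev_noPNE {V : Type} [Fintype V] (G : SimpleGraph V) {u v : V} (huv : G.Adj u v)
    (ω : Tables V) (hB : Bev G u v (ω u) (ω v)) (σ : V → Bool) (hσ : isPNE G ω σ) :
    False := by
  have hmu : maskN G u σ ∈ NbhdS G u := by
    simp only [NbhdS, Finset.mem_filter, Finset.mem_univ, true_and]
    intro w hw; simp [maskN, hw]
  have hmv : maskN G v σ ∈ NbhdS G v := by
    simp only [NbhdS, Finset.mem_filter, Finset.mem_univ, true_and]
    intro w hw; simp [maskN, hw]
  have h1 : maskN G u σ v = σ v := by simp [maskN, huv]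
  have h2 : maskN G v σ u = σ u := by simp [maskN, huv.symm]
  rcases hB with ⟨ha, hb⟩ | ⟨ha, hb⟩
  · have e1 : σ u = !(σ v) := by rw [hσ u, ha _ hmu, h1]
    have e2 : σ v = σ u := by rw [hσ v, hb _ hmv, h2]
    rw [e2] at e1
    simp at e1
  · have e1 : σ u = σ v := by rw [hσ u, ha _ hmu, h1]
    have e2 : σ v = !(σ u) := by rw [hσ v, hb _ hmv, h2]
    rw [e1] at e2
    simp at e2

/-! ### Nat.card helpers -/

lemma natcard_compl {β : Type} [Fintype β] (p : β → Prop) :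
    Nat.card {b : β // ¬ p b} = Nat.card β - Nat.card {b // p b} := by
  classical
  simp only [Nat.card_eq_fintype_card]
  exact Fintype.card_subtype_compl p

lemma natcard_mono {β : Type} [Fintype β] (p q : β → Prop) (h : ∀ b, p b → q b) :
    Nat.card {b // p b} ≤ Nat.card {b // q b} := by
  classical
  simp only [Nat.card_eq_fintype_card]
  exact Fintype.card_subtype_mono p q h

lemma natcard_le {β : Type} [Fintype β] (p : β → Prop) :
    Nat.card {b // p b} ≤ Nat.card β := by
  classical
  simp only [Nat.card_eq_fintype_card]
  exact Fintype.card_subtype_le p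

lemma natcard_fun {α β : Type} [Fintype α] [DecidableEq α] [Fintype β] :
    Nat.card (α → β) = Nat.card β ^ Nat.card α := by
  simp [Nat.card_eq_fintype_card, Fintype.card_fun]

lemma sum_ind {β : Type} [Fintype β] (A : β → Prop) :
    (∑ b : β, if A b then (1 : ℝ) else 0) = (Nat.card {b // A b} : ℝ) := by
  classical
  rw [Nat.card_eq_fintype_card, Fintype.card_subtype, Finset.sum_boole]

/-! ### arithmetic -/

lemma key_arith {d du dv : ℕ} (hd : 1 ≤ d) (hdu : du ≤ d) (hdv : dv ≤ d) :
    2 ^ du + 2 ^ dv ≤ 3 * 2 ^ (2 * d - 2) + 1 := by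
  have h1 : 2 ^ du ≤ 2 ^ d := Nat.pow_le_pow_right (by norm_num) hdu
  have h2 : 2 ^ dv ≤ 2 ^ d := Nat.pow_le_pow_right (by norm_num) hdv
  by_cases hd1 : d = 1
  · subst hd1
    norm_num at h1 h2 ⊢
    omega
  · have hd2 : 2 ≤ d := by omega
    have h3 : 2 ^ d + 2 ^ d = 2 ^ (d + 1) := by rw [pow_succ]; ring
    have h4 : (2:ℕ) ^ (d + 1) ≤ 2 ^ (2 * d - 1) := Nat.pow_le_pow_right (by norm_num) (by omega)
    have h5 : (2:ℕ) ^ (2 * d - 1) = 2 * 2 ^ (2 * d - 2) := by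
      have he : 2 * d - 1 = (2 * d - 2) + 1 := by omega
      rw [he, pow_succ]; ring
    have h6 : 2 * 2 ^ (2 * d - 2) ≤ 3 * 2 ^ (2 * d - 2) + 1 := by
      nlinarith [Nat.zero_le (2 ^ (2 * d - 2))]
    omega

lemma real_factor {Nc su sv Eb : ℕ} (hsu : su ≤ Nc) (hsv : sv ≤ Nc)
    (hkey : su + sv ≤ Eb + 1) :
    ((1 : ℝ) / 2) ^ Eb * ((2:ℝ) ^ Nc * 2 ^ Nc)
      ≤ (2:ℝ) ^ (Nc - su) * 2 ^ (Nc - sv) + 2 ^ (Nc - su) * 2 ^ (Nc - sv) := by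
  have h1 : (2:ℝ) ^ Nc = 2 ^ (Nc - su) * 2 ^ su := by
    rw [← pow_add, Nat.sub_add_cancel hsu]
  have h2 : (2:ℝ) ^ Nc = 2 ^ (Nc - sv) * 2 ^ sv := by
    rw [← pow_add, Nat.sub_add_cancel hsv]
  have hq : ((1 : ℝ) / 2) ^ Eb * ((2:ℝ) ^ su * 2 ^ sv) ≤ 2 := by
    rw [div_pow, one_pow, div_mul_eq_mul_div, one_mul, div_le_iff₀ (by positivity)]
    calc (2:ℝ) ^ su * 2 ^ sv = 2 ^ (su + sv) := by rw [pow_add]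
      _ ≤ 2 ^ (Eb + 1) := by
          apply pow_le_pow_right₀ (by norm_num) hkey
      _ = 2 * 2 ^ Eb := by rw [pow_succ]; ring
  have hpos : (0:ℝ) ≤ 2 ^ (Nc - su) * 2 ^ (Nc - sv) := by positivity
  calc ((1 : ℝ) / 2) ^ Eb * ((2:ℝ) ^ Nc * 2 ^ Nc)
      = (((1 : ℝ) / 2) ^ Eb * ((2:ℝ) ^ su * 2 ^ sv)) * (2 ^ (Nc - su) * 2 ^ (Nc - sv)) := by
        rw [show (2:ℝ) ^ Nc * 2 ^ Nc = (2 ^ (Nc - su) * 2 ^ su) * (2 ^ (Nc - sv) * 2 ^ sv) by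
          rw [← h1, ← h2]]
        ring
    _ ≤ 2 * (2 ^ (Nc - su) * 2 ^ (Nc - sv)) := by
        exact mul_le_mul_of_nonneg_right hq hpos
    _ = _ := by ring

/-- **Many `d`-bounded edges.** If `G` contains `m` (not necessarily disjoint) edges whose
endpoints all have degree at most `d ≥ 1`, then a random game on `G` has no pure Nash
equilibrium with probability at least `1 - exp(-(m/(2d)) (1/8)^{2^{2d-2}})`. -/
theorem stmt8 {V : Type} [Fintype V] [DecidableEq V] (G : SimpleGraph V)
    (d m : ℕ) (hd : 1 ≤ d) (E' : Finset (Sym2 V)) (hcard : E'.card = m)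
    (hedge : ∀ e ∈ E', e ∈ G.edgeSet ∧ ∀ v ∈ e, degOf G v ≤ d) :
    1 - Real.exp (-((m : ℝ) / (2 * (d : ℝ)) * (1 / 8 : ℝ) ^ ((2 : ℝ) ^ (2 * (d : ℝ) - 2)))) ≤
      probT V (fun ω => ¬ ∃ σ, isPNE G ω σ) := by
  classical
  obtain ⟨P, hPm, hPadj, hPne, hPdis, -⟩ := greedy G d E'.card E' le_rfl hedge
  rw [hcard] at hPm
  set k := P.card with hk
  set Nc := Nat.card (V → Bool) with hNc
  set cF := Nat.card ((V → Bool) → Bool) with hcFdef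
  have hcF2 : cF = 2 ^ Nc := by
    rw [hcFdef, natcard_fun, hNc]
    norm_num [Nat.card_eq_fintype_card]
  have hcFpos : 0 < cF := by rw [hcF2]; positivity
  -- the per-pair event counts
  have hBcard : ∀ p ∈ P, Nat.card {fg : ((V → Bool) → Bool) × ((V → Bool) → Bool) //
        Bev G p.1 p.2 fg.1 fg.2}
      = 2 ^ (Nc - (NbhdS G p.1).card) * 2 ^ (Nc - (NbhdS G p.2).card)
        + 2 ^ (Nc - (NbhdS G p.1).card) * 2 ^ (Nc - (NbhdS G p.2).card) := by
    intro p hp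
    exact natcard_pairs (NbhdS G p.1) (NbhdS G p.2)
      (fun x => !(x p.2)) (fun x => x p.1) (fun x => x p.2) (fun x => !(x p.1))
      (fun _ => false) (by simp [NbhdS]) (by simp)
  set C : (V × V) → ((V → Bool) → Bool) → ((V → Bool) → Bool) → Prop :=
    fun p f g => ¬ Bev G p.1 p.2 f g with hC
  have hmain := main_count' C P hPne hPdis
  -- upper bound Bad by intersection of complements
  set NB := Nat.card {ω : Tables V // ∃ σ, isPNE G ω σ} with hNB
  set NCn := Nat.card {ω : V → ((V → Bool) → Bool) // ∀ p ∈ P, C p (ω p.1) (ω p.2)} with hNCn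
  have hsub : NB ≤ NCn := by
    apply natcard_mono
    rintro ω ⟨σ, hσ⟩ p hp hB
    exact Bev_noPNE G (hPadj p hp).1 ω hB σ hσ
  -- probabilistic setup
  have hTeq : Nat.card (Tables V) = cF ^ (Nat.card V) := natcard_fun
  have hTpos : (0:ℝ) < ((cF : ℝ)) ^ (Nat.card V) := by positivity
  simp only [probT]
  rw [sum_ind, ← Nat.card_eq_fintype_card,
    natcard_compl (p := fun ω : Tables V => ∃ σ, isPNE G ω σ), hTeq]
  have hNBle : NB ≤ cF ^ (Nat.card V) := by
    rw [← hTeq, hNB]; exact natcard_le _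
  rw [← hNB]
  push_cast [Nat.cast_sub hNBle]
  rw [sub_div, div_self (ne_of_gt hTpos)]
  -- suffices: NB / T ≤ exp X
  apply sub_le_sub_left
  -- abbreviations for the real bound
  set Eb : ℕ := 3 * 2 ^ (2 * d - 2) with hEb
  set qq : ℝ := ((1:ℝ) / 2) ^ Eb with hqq
  have hqqpos : 0 < qq := by rw [hqq]; positivity
  have hqqle : qq ≤ 1 := by
    rw [hqq]
    exact pow_le_one₀ (by norm_num) (by norm_num)
  -- identify the exponent in the statement
  have hqq8 : (1 / 8 : ℝ) ^ ((2 : ℝ) ^ (2 * (d : ℝ) - 2)) = qq := by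
    have h2d : (2:ℕ) ≤ 2 * d := by simpa using Nat.mul_le_mul_left 2 hd
    have hde : (2:ℝ) ^ (2 * (d:ℝ) - 2) = ((2 ^ (2 * d - 2) : ℕ) : ℝ) := by
      rw [show 2 * (d:ℝ) - 2 = ((2 * d - 2 : ℕ) : ℝ) by push_cast [h2d]; ring]
      rw [Real.rpow_natCast]
      push_cast
      ring
    rw [hde, Real.rpow_natCast, hqq, hEb]
    rw [show (1/8 : ℝ) = (1/2 : ℝ) ^ 3 by norm_num, ← pow_mul]
  rw [hqq8]
  -- chain of inequalities
  have hstep1 : (NB : ℝ) / ((cF:ℝ)) ^ (Nat.card V) ≤ (NCn : ℝ) / ((cF:ℝ)) ^ (Nat.card V) := by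
    gcongr
  -- the product formula
  have hm' : (NCn : ℝ) * ((cF:ℝ)) ^ (2 * k)
      = ((cF:ℝ)) ^ (Nat.card V)
        * ∏ p ∈ P, ((Nat.card {fg : ((V → Bool) → Bool) × ((V → Bool) → Bool) //
            C p fg.1 fg.2} : ℝ)) := by
    exact_mod_cast hmain
  have hpowne : ((cF:ℝ)) ^ (2 * k) ≠ 0 := by positivity
  have hstep2 : (NCn : ℝ) / ((cF:ℝ)) ^ (Nat.card V)
      = ∏ p ∈ P, ((Nat.card {fg : ((V → Bool) → Bool) × ((V → Bool) → Bool) //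
          C p fg.1 fg.2} : ℝ) / ((cF:ℝ) * cF)) := by
    rw [Finset.prod_div_distrib, Finset.prod_const]
    rw [div_eq_div_iff (ne_of_gt hTpos) (by positivity)]
    rw [show ((cF:ℝ) * cF) ^ k = ((cF:ℝ)) ^ (2 * k) by rw [← sq, ← pow_mul]]
    linarith [hm']
  -- bound each factor
  have hfac : ∀ p ∈ P, ((Nat.card {fg : ((V → Bool) → Bool) × ((V → Bool) → Bool) //
      C p fg.1 fg.2} : ℝ) / ((cF:ℝ) * cF)) ≤ 1 - qq := by
    intro p hp
    have hBle : Nat.card {fg : ((V → Bool) → Bool) × ((V → Bool) → Bool) //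
        Bev G p.1 p.2 fg.1 fg.2} ≤ cF * cF := by
      calc _ ≤ Nat.card (((V → Bool) → Bool) × ((V → Bool) → Bool)) := natcard_le _
        _ = cF * cF := Nat.card_prod _ _
    have hCeq : Nat.card {fg : ((V → Bool) → Bool) × ((V → Bool) → Bool) // C p fg.1 fg.2}
        = cF * cF - Nat.card {fg : ((V → Bool) → Bool) × ((V → Bool) → Bool) //
            Bev G p.1 p.2 fg.1 fg.2} := by
      rw [hC]
      rw [natcard_compl (p := fun fg : ((V → Bool) → Bool) × ((V → Bool) → Bool) =>
        Bev G p.1 p.2 fg.1 fg.2), Nat.card_prod]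
    -- degrees
    have hdu : degOf G p.1 ≤ d := (hPadj p hp).2.1
    have hdv : degOf G p.2 ≤ d := (hPadj p hp).2.2
    have hsu : (NbhdS G p.1).card ≤ Nc := nbhd_card_le G p.1
    have hsv : (NbhdS G p.2).card ≤ Nc := nbhd_card_le G p.2
    have hkey : (NbhdS G p.1).card + (NbhdS G p.2).card ≤ Eb + 1 := by
      rw [card_NbhdS, card_NbhdS, hEb]
      exact key_arith hd hdu hdv
    have hrf := real_factor (Nc := Nc) hsu hsv hkey
    have hBR : qq * ((cF:ℝ) * cF)
        ≤ ((Nat.card {fg : ((V → Bool) → Bool) × ((V → Bool) → Bool) //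
            Bev G p.1 p.2 fg.1 fg.2} : ℝ)) := by
      have hcast : ((Nat.card {fg : ((V → Bool) → Bool) × ((V → Bool) → Bool) //
          Bev G p.1 p.2 fg.1 fg.2} : ℕ) : ℝ)
          = (2:ℝ) ^ (Nc - (NbhdS G p.1).card) * 2 ^ (Nc - (NbhdS G p.2).card)
            + 2 ^ (Nc - (NbhdS G p.1).card) * 2 ^ (Nc - (NbhdS G p.2).card) := by
        rw [hBcard p hp]
        push_cast
        ring
      have hcFr : (cF : ℝ) = 2 ^ Nc := by rw [hcF2]; push_cast; ring
      rw [hcast, hcFr]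
      calc qq * ((2:ℝ) ^ Nc * 2 ^ Nc) = ((1:ℝ)/2) ^ Eb * ((2:ℝ) ^ Nc * 2 ^ Nc) := by rw [hqq]
        _ ≤ _ := hrf
    rw [hCeq]
    rw [div_le_iff₀ (by positivity)]
    push_cast [Nat.cast_sub hBle]
    nlinarith [hBR]
  have hstep3 : (∏ p ∈ P, ((Nat.card {fg : ((V → Bool) → Bool) × ((V → Bool) → Bool) //
      C p fg.1 fg.2} : ℝ) / ((cF:ℝ) * cF))) ≤ (1 - qq) ^ k := by
    rw [hk, ← Finset.prod_const]
    apply Finset.prod_le_prod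
    · intro p _; positivity
    · exact hfac
  have hstep4 : (1 - qq) ^ k ≤ Real.exp (-(qq * k)) := by
    have h1 : 1 - qq ≤ Real.exp (-qq) := by
      have := Real.add_one_le_exp (-qq)
      linarith
    calc (1 - qq) ^ k ≤ (Real.exp (-qq)) ^ k := by
          apply pow_le_pow_left₀ (by linarith) h1
      _ = Real.exp (-(qq * k)) := by
          rw [← Real.exp_nat_mul]
          congr 1
          ring
  have hstep5 : Real.exp (-(qq * k)) ≤ Real.exp (-((m : ℝ) / (2 * d) * qq)) := by
    apply Real.exp_le_exp.mpr
    have hdpos : (0:ℝ) < 2 * d := by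
      have : (1:ℝ) ≤ d := by exact_mod_cast hd
      linarith
    have hmk : (m : ℝ) / (2 * d) ≤ k := by
      rw [div_le_iff₀ hdpos]
      exact_mod_cast hPm
    nlinarith [hqqpos, hmk]
  calc (NB : ℝ) / ((cF:ℝ)) ^ (Nat.card V)
      ≤ (NCn : ℝ) / ((cF:ℝ)) ^ (Nat.card V) := hstep1
    _ = _ := hstep2
    _ ≤ (1 - qq) ^ k := hstep3
    _ ≤ Real.exp (-(qq * k)) := hstep4
    _ ≤ Real.exp (-((m : ℝ) / (2 * d) * qq)) := hstep5
end

section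
/- Let G be a finite simple graph on vertex set V, consider a random game on G, and for each strategy profile σ : V → {0,1} let X_σ be the indicator random variable of the event that σ is a pure Nash equilibrium. Define B_0 = { j : V → {0,1} | there exists k ∈ V such that j(k') = 0 for all k' ∈ N(k) }. Then for every profile i, the random variable X_i is independent of the family of random variables { X_j : j ⊕ i ∉ B_0 }, where (j ⊕ i)(k) = j(k) XOR i(k). -/
open scoped Classical
open Finset

/-- The real-valued indicator that profile `σ` is a pure Nash equilibrium. -/
noncomputable def pneInd {V : Type} (G : SimpleGraph V) (σ : V → Bool)
    (ω : Tables V) : ℝ :=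
  if isPNE G ω σ then 1 else 0

/-- The dependency neighborhood of the all-zero profile: profiles `j` such that some
player `k` has all of its neighbors playing `0` under `j`. -/
def B0 {V : Type} (G : SimpleGraph V) : Set (V → Bool) :=
  {j | ∃ k : V, ∀ k', G.Adj k k' → j k' = false}

/-- The uniform probability measure on best-response tables (the random game on `G`). -/
noncomputable def tablesMeasure (V : Type) [Fintype V] [DecidableEq V] :
    MeasureTheory.Measure (Tables V) :=
  (PMF.uniformOfFintype (Tables V)).toMeasure


section Aux

open ProbabilityTheory MeasureTheory

variable {V : Type} [Fintype V] [DecidableEq V] (G : SimpleGraph V) (i : V → Bool)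

/-- The entries of the tables read when checking that `i` is a PNE. -/
noncomputable def g1 : Tables V → (V → Bool) := fun ω v => ω v (maskN G v i)

/-- The tables with the entries read for `i` zeroed out. -/
noncomputable def g2 : Tables V → Tables V :=
  fun ω v τ => if τ = maskN G v i then false else ω v τ

/-- Splitting tables into the `i`-entries and the rest. -/
noncomputable def tEquiv :
    Tables V ≃ (V → Bool) × {b : Tables V // ∀ v, b v (maskN G v i) = false} where
  toFun ω := ⟨g1 G i ω, ⟨g2 G i ω, fun v => by simp [g2]⟩⟩
  invFun p := fun v τ => if τ = maskN G v i then p.1 v else p.2.1 v τ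
  left_inv ω := by
    funext v τ
    by_cases h : τ = maskN G v i <;> simp [g1, g2, h]
  right_inv p := by
    obtain ⟨a, b, hb⟩ := p
    refine Prod.ext ?_ (Subtype.ext ?_)
    · funext v; simp [g1]
    · funext v τ
      by_cases h : τ = maskN G v i <;> simp [g2, h, hb v]

lemma tablesMeasure_apply (s : Set (Tables V)) :
    tablesMeasure V s = (Nat.card s : ENNReal) / (Nat.card (Tables V) : ENNReal) := by
  rw [tablesMeasure, PMF.toMeasure_uniformOfFintype_apply _ .of_discrete]
  simp only [Nat.card_eq_fintype_card]

lemma nat_card_preimage_tEquiv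
    (A : Set ((V → Bool) × {b : Tables V // ∀ v, b v (maskN G v i) = false})) :
    Nat.card (tEquiv G i ⁻¹' A) = Nat.card A :=
  Nat.card_congr (Equiv.subtypeEquiv (tEquiv G i) fun _ => Iff.rfl)

lemma g1_g2_indepFun :
    IndepFun (g1 G i) (g2 G i) (tablesMeasure V) := by
  rw [ProbabilityTheory.indepFun_iff_measure_inter_preimage_eq_mul]
  intro s t _ _
  set Z := {b : Tables V // ∀ v, b v (maskN G v i) = false} with hZ
  set T : Set Z := Subtype.val ⁻¹' t with hT
  have h1 : g1 G i ⁻¹' s ∩ g2 G i ⁻¹' t = tEquiv G i ⁻¹' (s ×ˢ T) := by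
    ext ω; simp [tEquiv, Set.mem_prod, hT]
  have h2 : g1 G i ⁻¹' s = tEquiv G i ⁻¹' (s ×ˢ (Set.univ : Set Z)) := by
    ext ω; simp [tEquiv, Set.mem_prod]
  have h3 : g2 G i ⁻¹' t = tEquiv G i ⁻¹' ((Set.univ : Set (V → Bool)) ×ˢ T) := by
    ext ω; simp [tEquiv, Set.mem_prod, hT]
  have hprod : ∀ (u : Set (V → Bool)) (w : Set Z),
      Nat.card (u ×ˢ w : Set _) = Nat.card u * Nat.card w := by
    intro u w
    rw [Nat.card_congr (Equiv.Set.prod u w), Nat.card_prod]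
  have hN : Nat.card (Tables V) = Nat.card (V → Bool) * Nat.card Z := by
    rw [Nat.card_congr (tEquiv G i), Nat.card_prod]
  rw [tablesMeasure_apply, tablesMeasure_apply, tablesMeasure_apply,
    h1, h2, h3, nat_card_preimage_tEquiv, nat_card_preimage_tEquiv,
    nat_card_preimage_tEquiv, hprod, hprod, hprod, hN, Nat.card_univ, Nat.card_univ]
  have hZne : Nonempty Z := ⟨⟨fun _ _ => false, fun _ => rfl⟩⟩
  push_cast
  set a : ENNReal := (Nat.card s : ENNReal)
  set b : ENNReal := (Nat.card T : ENNReal)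
  set m : ENNReal := (Nat.card (V → Bool) : ENNReal)
  set z : ENNReal := (Nat.card Z : ENNReal)
  have hm0 : m ≠ 0 := by simp [m, Nat.card_pos.ne']
  have hz0 : z ≠ 0 := by simp [z, Nat.card_pos.ne']
  have hmz0 : m * z ≠ 0 := mul_ne_zero hm0 hz0
  have hmzt : m * z ≠ ⊤ := by
    simp [m, z, ENNReal.mul_ne_top]
  have key : ∀ x y : ENNReal, x / (m * z) * (y / (m * z)) = x * y / (m * z * (m * z)) := by
    intro x y
    rw [div_eq_mul_inv, div_eq_mul_inv, div_eq_mul_inv,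
      ENNReal.mul_inv (Or.inl hmz0) (Or.inl hmzt)]
    ring
  rw [key, show a * z * (m * b) = a * b * (m * z) by ring,
    ENNReal.mul_div_mul_right _ _ hmz0 hmzt]

lemma mask_ne {j : V → Bool} (hj : (fun k => xor (j k) (i k)) ∉ B0 G) (v : V) :
    maskN G v j ≠ maskN G v i := by
  simp only [B0, Set.mem_setOf_eq, not_exists] at hj
  have hv := hj v
  push_neg at hv
  obtain ⟨k', hadj, hne⟩ := hv
  intro h
  apply hne
  have hk := congrFun h k'
  simp only [maskN, if_pos hadj] at hk
  simp [hk]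

end Aux

/-- **Dependency neighborhoods.** For every profile `i`, the indicator `X_i` that `i` is
a PNE is independent of the family of indicators `X_j` over all profiles `j` with
`j ⊕ i ∉ B₀`. -/
theorem stmt13 {V : Type} [Fintype V] [DecidableEq V] (G : SimpleGraph V)
    (i : V → Bool) :
    ProbabilityTheory.IndepFun (pneInd G i)
      (fun (ω : Tables V)
          (j : {j : V → Bool // (fun k => xor (j k) (i k)) ∉ B0 G}) =>
        pneInd G j.1 ω)
      (tablesMeasure V) := by
  classical
  have hX : pneInd G i =
      (fun a : V → Bool => if (∀ v, i v = a v) then (1 : ℝ) else 0) ∘ g1 G i := by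
    funext ω
    simp only [pneInd, isPNE, Function.comp_apply, g1]
    congr
  have hY : (fun (ω : Tables V)
          (j : {j : V → Bool // (fun k => xor (j k) (i k)) ∉ B0 G}) =>
        pneInd G j.1 ω) =
      (fun (b : Tables V) (j : {j : V → Bool // (fun k => xor (j k) (i k)) ∉ B0 G}) =>
        pneInd G j.1 b) ∘ g2 G i := by
    funext ω j
    simp only [Function.comp_apply, pneInd]
    have hiff : isPNE G ω j.1 ↔ isPNE G (g2 G i ω) j.1 := by
      have hm : ∀ v, g2 G i ω v (maskN G v j.1) = ω v (maskN G v j.1) := by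
        intro v
        simp only [g2, if_neg (mask_ne G i j.2 v)]
      unfold isPNE
      exact forall_congr' fun v => by rw [hm v]
    exact if_congr hiff rfl rfl
  rw [hX, hY]
  exact (g1_g2_indepFun G i).comp Measurable.of_discrete Measurable.of_discrete
end

section
/- Define S(n,p) = ∑_{s=1}^{n} C(n,s)·2^{−n}·[ (1+(1−p)^s)^{n−s} − (1−(1−p)^s)^{n−s} ]. For every fixed ε > 0 there exist constants C, c > 0 such that for all sufficiently large n, setting p = (2+ε)·(log n)/n, one has S(n,p) ≤ C·n^{−ε/4} + C·e^{−c·n}. -/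
/-- `S(n,p) = ∑_{s=1}^n C(n,s) 2^{-n} [(1+(1-p)^s)^{n-s} - (1-(1-p)^s)^{n-s}]`. -/
noncomputable def Sfun (n : ℕ) (p : ℝ) : ℝ :=
  ∑ s ∈ Finset.Icc 1 n,
    (n.choose s : ℝ) / 2 ^ n *
      ((1 + (1 - p) ^ s) ^ (n - s) - (1 - (1 - p) ^ s) ^ (n - s))

set_option maxHeartbeats 2000000

open Real Finset Filter


lemma bern_upper {p : ℝ} (hp1 : p ≤ 1) (s : ℕ) : (1-p)^s ≤ exp (-((s:ℝ)*p)) := by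
  calc (1-p)^s ≤ (exp (-p))^s := by
        apply pow_le_pow_left₀ (by linarith) ?_
        have := Real.add_one_le_exp (-p); linarith
    _ = exp (-((s:ℝ)*p)) := by rw [← Real.exp_nat_mul]; ring_nf

lemma bern_lower {p : ℝ} (hp : 0 ≤ p) (hp1 : p ≤ 1) (s : ℕ) : (1-p)^s * (1 + (s:ℝ)*p) ≤ 1 := by
  have h1 : (1:ℝ) + (s:ℝ)*p ≤ (1+p)^s := by
    have := one_add_mul_le_pow (a := p) (by linarith) s
    simpa [mul_comm] using this
  calc (1-p)^s * (1 + (s:ℝ)*p) ≤ (1-p)^s * (1+p)^s := by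
        apply mul_le_mul_of_nonneg_left h1 (pow_nonneg (by linarith) s)
    _ = ((1-p)*(1+p))^s := by rw [mul_pow]
    _ = (1-p^2)^s := by ring_nf
    _ ≤ 1 := pow_le_one₀ (by nlinarith) (by nlinarith)

lemma diff_pow_le {x : ℝ} (hx0 : 0 ≤ x) (hx1 : x ≤ 1) (m : ℕ) :
    (1+x)^m - (1-x)^m ≤ 2*m*x*(1+x)^m := by
  induction m with
  | zero => simp
  | succ m ih =>
    have hle : (1-x)^m ≤ (1+x)^m := pow_le_pow_left₀ (by linarith) (by linarith) m
    have h1x : (0:ℝ) ≤ (1+x)^m := by positivity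
    have key : (1+x)^(m+1) - (1-x)^(m+1) = (1+x)*((1+x)^m - (1-x)^m) + 2*x*(1-x)^m := by ring
    have h2 : (1+x)*((1+x)^m - (1-x)^m) ≤ (1+x)*(2*m*x*(1+x)^m) :=
      mul_le_mul_of_nonneg_left ih (by linarith)
    have h3 : 2*x*(1-x)^m ≤ 2*x*(1+x)^m :=
      mul_le_mul_of_nonneg_left hle (by linarith)
    have h5 : (0:ℝ) ≤ x*x*(1+x)^m := by positivity
    push_cast
    simp only [pow_succ]
    rw [show (1+x)^(m+1) = (1+x)^m*(1+x) from pow_succ _ _, show (1-x)^(m+1) = (1-x)^m*(1-x) from pow_succ _ _] at key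
    nlinarith [h2, h3, h5, key]

lemma one_add_le_two_exp {x : ℝ} : 1 + x ≤ 2 * exp (-((1-x)/2)) := by
  have := Real.add_one_le_exp (-((1-x)/2))
  linarith

lemma choose_bound1 (n s : ℕ) : (n.choose s : ℝ) ≤ (n:ℝ)^s := by
  calc (n.choose s : ℝ) ≤ (n.descFactorial s : ℝ) := by
        exact_mod_cast Nat.choose_le_descFactorial n s
    _ ≤ (n:ℝ)^s := by exact_mod_cast Nat.descFactorial_le_pow n s

lemma factorial_lower (s : ℕ) : (s:ℝ)^s ≤ (s.factorial : ℝ) * exp s := by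
  induction s with
  | zero => simp
  | succ s ih =>
    have h2 : ((s:ℝ)+1)^s ≤ (s:ℝ)^s * exp 1 := by
      rcases Nat.eq_zero_or_pos s with h | h
      · subst h; simp
      · have hs : (0:ℝ) < s := by exact_mod_cast h
        have e1 : ((s:ℝ)+1)^s = (s:ℝ)^s * (1 + 1/s)^s := by
          rw [← mul_pow]; congr 1; field_simp
        rw [e1]
        apply mul_le_mul_of_nonneg_left ?_ (by positivity)
        calc (1+1/(s:ℝ))^s ≤ (exp (1/s))^s := by
              apply pow_le_pow_left₀ (by positivity) ?_
              have := Real.add_one_le_exp (1/(s:ℝ)); linarith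
          _ = exp 1 := by rw [← Real.exp_nat_mul]; field_simp
    have hfs : (0:ℝ) ≤ (s.factorial : ℝ) := by positivity
    have goal' : ((s:ℝ)+1)^(s+1) ≤ ((s:ℝ)+1) * (s.factorial:ℝ) * exp (s+1) := by
      have c1 : ((s:ℝ)+1)^(s+1) = ((s:ℝ)+1) * ((s:ℝ)+1)^s := by ring
      rw [c1, Real.exp_add]
      calc ((s:ℝ)+1) * ((s:ℝ)+1)^s ≤ ((s:ℝ)+1) * ((s:ℝ)^s * exp 1) :=
            mul_le_mul_of_nonneg_left h2 (by positivity)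
        _ ≤ ((s:ℝ)+1) * ((s.factorial:ℝ) * exp s * exp 1) := by
            apply mul_le_mul_of_nonneg_left ?_ (by positivity)
            exact mul_le_mul_of_nonneg_right ih (exp_pos 1).le
        _ = ((s:ℝ)+1) * (s.factorial:ℝ) * (exp s * exp 1) := by ring
    have : ((s+1).factorial : ℝ) = ((s:ℝ)+1) * (s.factorial:ℝ) := by
      rw [Nat.factorial_succ]; push_cast; ring
    rw [show ((s+1:ℕ):ℝ) = (s:ℝ)+1 by push_cast; ring, this]
    exact goal'

lemma choose_bound2 (n s : ℕ) (hs : 1 ≤ s) : (n.choose s : ℝ) ≤ (exp 1 * n / s)^s := by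
  have hs0 : (0:ℝ) < s := by exact_mod_cast hs
  have h1 : (n.choose s : ℝ) * (s.factorial : ℝ) ≤ (n:ℝ)^s := by
    have e1 : n.choose s * s.factorial = n.descFactorial s := by
      rw [Nat.descFactorial_eq_factorial_mul_choose, Nat.mul_comm]
    calc (n.choose s : ℝ) * (s.factorial : ℝ) = (n.descFactorial s : ℝ) := by
          rw [← Nat.cast_mul, e1]
      _ ≤ (n:ℝ)^s := by exact_mod_cast Nat.descFactorial_le_pow n s
  have h2 := factorial_lower s
  have hss : (0:ℝ) < (s:ℝ)^s := by positivity
  have h3 : (n.choose s : ℝ) * (s:ℝ)^s ≤ (n:ℝ)^s * exp s := by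
    calc (n.choose s : ℝ) * (s:ℝ)^s ≤ (n.choose s : ℝ) * ((s.factorial:ℝ) * exp s) :=
          mul_le_mul_of_nonneg_left h2 (by positivity)
      _ = ((n.choose s : ℝ) * (s.factorial:ℝ)) * exp s := by ring
      _ ≤ (n:ℝ)^s * exp s := mul_le_mul_of_nonneg_right h1 (exp_pos _).le
  rw [div_pow, mul_pow, Real.exp_one_pow, le_div_iff₀ hss]
  calc (n.choose s : ℝ) * (s:ℝ)^s ≤ (n:ℝ)^s * exp s := h3
    _ = exp s * (n:ℝ)^s := by ring

lemma log_le_third (y : ℝ) (hy : 0 < y) : Real.log y ≤ 3 * y ^ ((1:ℝ)/3) / exp 1 := by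
  have h1 : Real.log (y ^ ((1:ℝ)/3)) ≤ y ^ ((1:ℝ)/3) / exp 1 := by
    have hpos : (0:ℝ) < y ^ ((1:ℝ)/3) := Real.rpow_pos_of_pos hy _
    have := Real.log_le_sub_one_of_pos (x := y ^ ((1:ℝ)/3) / exp 1) (by positivity)
    rw [Real.log_div (by positivity) (exp_ne_zero 1), Real.log_exp] at this
    linarith
  rw [Real.log_rpow hy] at h1
  have := mul_le_mul_of_nonneg_left h1 (by norm_num : (0:ℝ) ≤ 3)
  calc Real.log y = 3 * (1/3 * Real.log y) := by ring
    _ ≤ 3 * (y ^ ((1:ℝ)/3) / exp 1) := this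
    _ = 3 * y ^ ((1:ℝ)/3) / exp 1 := by ring

lemma kl_pos {b : ℝ} (h0 : 0 < b) (hb : b < 1/2) :
    0 < Real.log 2 + b*Real.log b + (1-b)*Real.log (1-b) := by
  have hb1 : 0 < 1 - b := by linarith
  have e1 : Real.log 2 + b*Real.log b + (1-b)*Real.log (1-b)
      = b * Real.log (2*b) + (1-b) * Real.log (2*(1-b)) := by
    rw [Real.log_mul (by norm_num) (ne_of_gt h0), Real.log_mul (by norm_num) (ne_of_gt hb1)]
    ring
  rw [e1]
  have h2 : 1 - 1/(2*b) < Real.log (2*b) := by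
    have := Real.log_lt_sub_one_of_pos (x := 1/(2*b)) (by positivity) (by
      intro h; field_simp at h; linarith)
    rw [Real.log_div one_ne_zero (by positivity), Real.log_one] at this
    linarith
  have h3 : 1 - 1/(2*(1-b)) ≤ Real.log (2*(1-b)) := by
    have := Real.log_le_sub_one_of_pos (x := 1/(2*(1-b))) (by positivity)
    rw [Real.log_div one_ne_zero (by positivity), Real.log_one] at this
    linarith
  have k2 : b * (1 - 1/(2*b)) = b - 1/2 := by field_simp
  have k3 : (1-b) * (1 - 1/(2*(1-b))) = (1-b) - 1/2 := by field_simp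
  nlinarith [mul_lt_mul_of_pos_left h2 h0, mul_le_mul_of_nonneg_left h3 hb1.le]


lemma choose_theta (n k : ℕ) (hk : k ≤ n) {θ : ℝ} (h0 : 0 ≤ θ) (h1 : θ ≤ 1) :
    (n.choose k : ℝ) * (θ^k * (1-θ)^(n-k)) ≤ 1 := by
  have e1 : (1:ℝ) = ∑ j ∈ range (n+1), θ^j * (1-θ)^(n-j) * (n.choose j : ℝ) := by
    have := add_pow θ (1-θ) n
    simp at this
    rw [← this]
  have := Finset.single_le_sum (f := fun j => θ^j * (1-θ)^(n-j) * (n.choose j : ℝ))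
    (fun j _ => mul_nonneg (mul_nonneg (pow_nonneg h0 _) (pow_nonneg (by linarith) _)) (Nat.cast_nonneg _))
    (Finset.mem_range.mpr (Nat.lt_succ_of_le hk))
  rw [show (n.choose k : ℝ) * (θ^k * (1-θ)^(n-k)) = θ^k * (1-θ)^(n-k) * (n.choose k : ℝ) from by ring]
  exact le_trans this e1.ge

lemma choose_step (n k : ℕ) (h : 2*(k+1) ≤ n+1) : n.choose k ≤ n.choose (k+1) := by
  have hkn : k ≤ n := by omega
  have key := Nat.choose_succ_right_eq n k
  have h2 : k+1 ≤ n - k := by omega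
  have : n.choose k * (k+1) ≤ n.choose (k+1) * (k+1) := by
    rw [key]
    exact Nat.mul_le_mul_left _ h2
  exact Nat.le_of_mul_le_mul_right this (Nat.succ_pos k)

lemma choose_mono_half (n s t : ℕ) (hst : s ≤ t) (ht : 2*t ≤ n+1) : n.choose s ≤ n.choose t := by
  induction t with
  | zero => have : s = 0 := by omega
            simp [this]
  | succ t ih =>
    rcases Nat.lt_or_ge s (t+1) with h | h
    · exact le_trans (ih (by omega) (by omega)) (choose_step n t ht)
    · have : s = t+1 := by omega
      simp [this]

lemma sum_choose_le (n : ℕ) (A : Finset ℕ) (hA : A ⊆ range (n+1)) :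
    ∑ s ∈ A, (n.choose s : ℝ) / 2^n ≤ 1 := by
  have h1 : ∑ s ∈ A, (n.choose s : ℝ) ≤ ∑ s ∈ range (n+1), (n.choose s : ℝ) :=
    Finset.sum_le_sum_of_subset_of_nonneg hA (fun i _ _ => by positivity)
  have h2 : ∑ s ∈ range (n+1), (n.choose s : ℝ) = 2^n := by
    rw [← Nat.cast_sum]
    rw [Nat.sum_range_choose]
    push_cast; ring
  rw [← Finset.sum_div, div_le_one (by positivity)]
  linarith

lemma geom_Ioc_eq (m : ℕ) : ∑ s ∈ Finset.Ioc 0 m, ((1:ℝ)/2)^s = 1 - (1/2)^m := by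
  induction m with
  | zero => simp
  | succ m ih =>
    rw [Finset.sum_Ioc_succ_top (Nat.zero_le _), ih]
    ring

lemma geom_Ioc (m : ℕ) : ∑ s ∈ Finset.Ioc 0 m, ((1:ℝ)/2)^s ≤ 1 := by
  rw [geom_Ioc_eq]
  have : (0:ℝ) ≤ (1/2)^m := by positivity
  linarith


theorem termI {ε δ p L : ℝ} {n s : ℕ} (hε : 0 < ε) (hδ0 : 0 < δ) (hδ1 : δ ≤ 1/12)
    (hkey : 2 + ε/2 ≤ (2+ε)*(1-δ)^2)
    (hL1 : 1 ≤ L) (hLlog : L = Real.log n)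
    (hp : p = (2+ε)*L/n) (hp1 : p ≤ 1)
    (hs1 : 1 ≤ s) (hsn : s ≤ n)
    (hsle : (s:ℝ)*((2+ε)*L) ≤ δ*n) :
    (n.choose s : ℝ)/2^n * ((1+(1-p)^s)^(n-s) - (1-(1-p)^s)^(n-s))
      ≤ (1/2)^s * exp (-(ε/4*L)) := by
  have hn1 : 1 ≤ n := le_trans hs1 hsn
  have hrn0 : (0:ℝ) < n := by exact_mod_cast hn1
  have hs0 : (0:ℝ) < s := by exact_mod_cast hs1
  have h2ε : (0:ℝ) < 2 + ε := by linarith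
  have hL0 : 0 < L := by linarith
  have hp0 : 0 ≤ p := by rw [hp]; positivity
  set x : ℝ := (1-p)^s with hxdef
  have hx0 : 0 ≤ x := pow_nonneg (by linarith) s
  have hx1 : x ≤ 1 := pow_le_one₀ (by linarith) (by linarith)
  have hexpL : Real.exp L = n := by rw [hLlog]; exact Real.exp_log hrn0
  -- s*p ≤ δ
  have hsp : (s:ℝ)*p = (s:ℝ)*((2+ε)*L)/n := by rw [hp]; ring
  have hspδ : (s:ℝ)*p ≤ δ := by
    rw [hsp]; rw [div_le_iff₀ hrn0]
    calc (s:ℝ)*((2+ε)*L) ≤ δ*n := hsle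
      _ = δ*n := rfl
  have hsp0 : 0 ≤ (s:ℝ)*p := by positivity
  -- s ≤ δ n
  have h2εL : (1:ℝ) ≤ (2+ε)*L := by nlinarith
  have hsδn : (s:ℝ) ≤ δ*n := by
    have h2 : (s:ℝ)*1 ≤ (s:ℝ)*((2+ε)*L) := mul_le_mul_of_nonneg_left h2εL hs0.le
    linarith
  -- cast of n - s
  have hmcast : ((n-s:ℕ):ℝ) = (n:ℝ) - s := by
    rw [Nat.cast_sub hsn]
  have hm : (1-δ)*(n:ℝ) ≤ ((n-s:ℕ):ℝ) := by rw [hmcast]; nlinarith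
  -- Bernoulli lower bound : 1 - x ≥ s p (1-δ)
  have bl := bern_lower hp0 hp1 s
  have hA : (s:ℝ)*p ≤ (1-x)*(1+(s:ℝ)*p) := by nlinarith [bl]
  have hB : (s:ℝ)*p*(1-δ)*(1+(s:ℝ)*p) ≤ (s:ℝ)*p := by
    have hin : (1-δ)*(1+(s:ℝ)*p) ≤ 1 := by nlinarith [mul_nonneg hδ0.le hsp0]
    calc (s:ℝ)*p*(1-δ)*(1+(s:ℝ)*p) = (s:ℝ)*p*((1-δ)*(1+(s:ℝ)*p)) := by ring
      _ ≤ (s:ℝ)*p*1 := mul_le_mul_of_nonneg_left hin hsp0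
      _ = (s:ℝ)*p := by ring
  have hbern : (s:ℝ)*p*(1-δ) ≤ 1 - x := by
    have h3 := le_trans hB hA
    have h4 : (0:ℝ) < 1 + (s:ℝ)*p := by linarith
    exact le_of_mul_le_mul_right h3 h4
  -- exponent bound
  have hE : (1+ε/4)*(s*L) ≤ ((n-s:ℕ):ℝ)*(1-x)/2 := by
    have e1 : (1-δ)*(n:ℝ)*((s:ℝ)*p*(1-δ)) ≤ ((n-s:ℕ):ℝ)*(1-x) := by
      apply mul_le_mul hm hbern (mul_nonneg hsp0 (by linarith)) (by positivity)
    have e2 : (1-δ)*(n:ℝ)*((s:ℝ)*p*(1-δ)) = (2+ε)*(1-δ)^2*(s*L) := by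
      rw [hp]; field_simp
    rw [e2] at e1
    nlinarith [mul_nonneg (le_of_lt hs0) (le_of_lt hL0)]
  -- bracket bound
  have hbr : (1+x)^(n-s) - (1-x)^(n-s) ≤ 2^(n-s) * exp (-(((n-s:ℕ):ℝ)*(1-x)/2)) := by
    have h1 : (1-x)^(n-s) ≥ 0 := pow_nonneg (by linarith) _
    have h2 : (1+x)^(n-s) ≤ (2 * exp (-((1-x)/2)))^(n-s) :=
      pow_le_pow_left₀ (by linarith) one_add_le_two_exp _
    calc (1+x)^(n-s) - (1-x)^(n-s) ≤ (1+x)^(n-s) := by linarith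
      _ ≤ (2 * exp (-((1-x)/2)))^(n-s) := h2
      _ = 2^(n-s) * exp (-(((n-s:ℕ):ℝ)*(1-x)/2)) := by
          rw [mul_pow, ← Real.exp_nat_mul]; ring_nf
  -- put together
  have hch : (n.choose s : ℝ) ≤ (n:ℝ)^s := choose_bound1 n s
  have hchpos : (0:ℝ) ≤ (n.choose s : ℝ) := Nat.cast_nonneg _
  have h2pow : (2:ℝ)^(n-s) / 2^n = (1/2:ℝ)^s := by
    rw [div_pow, one_pow, div_eq_div_iff (by positivity) (by positivity), one_mul, ← pow_add]
    congr 1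
    omega
  calc (n.choose s : ℝ)/2^n * ((1+x)^(n-s) - (1-x)^(n-s))
      ≤ (n.choose s : ℝ)/2^n * (2^(n-s) * exp (-(((n-s:ℕ):ℝ)*(1-x)/2))) := by
        apply mul_le_mul_of_nonneg_left hbr (by positivity)
    _ ≤ (n:ℝ)^s/2^n * (2^(n-s) * exp (-((1+ε/4)*(s*L)))) := by
        apply mul_le_mul (by apply div_le_div_of_nonneg_right ?_ (by positivity); exact hch)
          ?_ (by positivity) (by positivity)
        · apply mul_le_mul_of_nonneg_left ?_ (by positivity)
          apply Real.exp_le_exp.mpr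
          linarith
    _ = (1/2)^s * ((n:ℝ)^s * exp (-((1+ε/4)*(s*L)))) := by
        rw [← h2pow]; ring
    _ ≤ (1/2)^s * exp (-(ε/4*L)) := by
        apply mul_le_mul_of_nonneg_left ?_ (by positivity)
        have e3 : (n:ℝ)^s = exp (s*L) := by
          rw [← hexpL, ← Real.exp_nat_mul]
        rw [e3, ← Real.exp_add]
        apply Real.exp_le_exp.mpr
        have : (s:ℝ)*L + -((1+ε/4)*(s*L)) = -(ε/4*(s*L)) := by ring
        rw [this]
        have hs1' : (1:ℝ) ≤ s := by exact_mod_cast hs1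
        have h5 : L ≤ s*L := by nlinarith [mul_le_mul_of_nonneg_right hs1' hL0.le]
        nlinarith [mul_nonneg (by linarith : (0:ℝ) ≤ ε/4) (by linarith : (0:ℝ) ≤ (s:ℝ)*L - L)]

lemma sLp_bound {n s : ℕ} (hs1 : 1 ≤ s) (hn0 : (0:ℝ) < n) (hsz : (s:ℝ) ≤ (n:ℝ)/20) :
    (s:ℝ) * Real.log (exp 1 * n/(2*s)) ≤ (17/100)*n := by
  have hs0 : (0:ℝ) < s := by exact_mod_cast hs1
  set y : ℝ := exp 1 * n/(2*s) with hy
  have hy0 : 0 < y := by positivity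
  set u : ℝ := y ^ ((1:ℝ)/3) with hu
  have hu0 : 0 ≤ u := Real.rpow_nonneg hy0.le _
  have hlog : Real.log y ≤ 3*u/exp 1 := log_le_third y hy0
  have hT : (s:ℝ) * Real.log y ≤ (s:ℝ) * (3*u/exp 1) :=
    mul_le_mul_of_nonneg_left hlog hs0.le
  have hu3 : u^(3:ℕ) = y := by
    rw [hu, ← Real.rpow_natCast (y ^ ((1:ℝ)/3)) 3, ← Real.rpow_mul hy0.le]
    norm_num
  obtain ⟨E, hEdef⟩ : ∃ E : ℝ, E = exp 1 := ⟨exp 1, rfl⟩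
  have he2 : (7:ℝ) ≤ E * E := by
    rw [hEdef]; nlinarith [Real.exp_one_gt_d9]
  have he0 : (0:ℝ) < E := by rw [hEdef]; exact exp_pos 1
  rw [← hEdef] at hT hy
  have hT3 : ((s:ℝ) * (3*u/E))^(3:ℕ) ≤ ((17/100)*n)^(3:ℕ) := by
    have e1 : ((s:ℝ) * (3*u/E))^(3:ℕ) = 27*(s:ℝ)^3*(u^(3:ℕ))/E^3 := by
      field_simp; ring
    rw [e1, hu3, hy]
    have e2 : 27*(s:ℝ)^3*(E * n/(2*s))/E^3 = 27*(s:ℝ)^2*n/(2*(E * E)) := by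
      field_simp
    rw [e2]
    rw [div_le_iff₀ (by nlinarith)]
    have hs2 : (s:ℝ)^2 ≤ (n:ℝ)^2/400 := by nlinarith
    nlinarith [pow_pos hn0 3, hs2, mul_le_mul_of_nonneg_right hs2 hn0.le]
  have hTle : (s:ℝ) * (3*u/E) ≤ (17/100)*n :=
    le_of_pow_le_pow_left₀ (by norm_num) (by positivity) hT3
  linarith

theorem termIIa {ε δ p L : ℝ} {n s : ℕ} (hε : 0 < ε) (hδ0 : 0 < δ) (hδ1 : δ ≤ 1/12)
    (hL1 : 1 ≤ L) (hLlog : L = Real.log n)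
    (hp : p = (2+ε)*L/n) (hp1 : p ≤ 1)
    (hs1 : 1 ≤ s) (hsn : s ≤ n)
    (hsgt : δ*n < (s:ℝ)*((2+ε)*L)) (hsz : (s:ℝ) ≤ (n:ℝ)/20)
    (hC5 : Real.log (exp 1*(2+ε)/(2*δ) * L) ≤ L/5) :
    (n.choose s : ℝ)/2^n * ((1+(1-p)^s)^(n-s) - (1-(1-p)^s)^(n-s))
      ≤ exp (-(δ/(4*(2+ε)) * n)) + exp (-((1/40) * n)) := by
  have hn1 : 1 ≤ n := le_trans hs1 hsn
  have hrn0 : (0:ℝ) < n := by exact_mod_cast hn1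
  have hs0 : (0:ℝ) < s := by exact_mod_cast hs1
  have h2ε : (0:ℝ) < 2 + ε := by linarith
  have hL0 : 0 < L := by linarith
  have hp0 : 0 ≤ p := by rw [hp]; positivity
  set x : ℝ := (1-p)^s with hxdef
  have hx0 : 0 ≤ x := pow_nonneg (by linarith) s
  have hx1 : x ≤ 1 := pow_le_one₀ (by linarith) (by linarith)
  have hsp0 : 0 ≤ (s:ℝ)*p := by positivity
  have hmcast : ((n-s:ℕ):ℝ) = (n:ℝ) - s := Nat.cast_sub hsn
  have hm : (19/20)*(n:ℝ) ≤ ((n-s:ℕ):ℝ) := by rw [hmcast]; linarith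
  have hm' : ((n-s:ℕ):ℝ) ≤ n := by rw [hmcast]; linarith
  -- choose bound : ch / 2^n * 2^(n-s) ≤ exp (s * log y)
  set y : ℝ := exp 1 * n/(2*s) with hy
  have hy0 : 0 < y := by positivity
  have hch : (n.choose s : ℝ) ≤ (exp 1 * n/s)^s := choose_bound2 n s hs1
  have h2pow : (2:ℝ)^(n-s) / 2^n = (1/2:ℝ)^s := by
    rw [div_pow, one_pow, div_eq_div_iff (by positivity) (by positivity), one_mul, ← pow_add]
    congr 1
    omega
  have hchy : (n.choose s : ℝ) * ((2:ℝ)^(n-s)/2^n) ≤ exp ((s:ℝ) * Real.log y) := by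
    have e1 : (exp 1 * n/s)^s * (1/2:ℝ)^s = y^s := by
      rw [← mul_pow]; congr 1; rw [hy]; ring
    have e2 : y^s = exp ((s:ℝ) * Real.log y) := by
      rw [← Real.exp_log hy0, ← Real.exp_nat_mul, Real.exp_log hy0]
    rw [h2pow, ← e2, ← e1]
    apply mul_le_mul_of_nonneg_right hch (by positivity)
  -- main estimate, split on s*p ≤ 1
  have hbr0 : (1-x)^(n-s) ≥ 0 := pow_nonneg (by linarith) _
  have hEbound : ∀ w : ℝ, w ≤ 1 - x → 0 ≤ w →
      (n.choose s : ℝ)/2^n * ((1+x)^(n-s) - (1-x)^(n-s))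
        ≤ exp ((s:ℝ) * Real.log y) * exp (-((19/20)*(n:ℝ)*w/2)) := by
    intro w hw hw0
    have hbr : (1+x)^(n-s) - (1-x)^(n-s) ≤ 2^(n-s) * exp (-(((n-s:ℕ):ℝ)*(1-x)/2)) := by
      have h2 : (1+x)^(n-s) ≤ (2 * exp (-((1-x)/2)))^(n-s) :=
        pow_le_pow_left₀ (by linarith) one_add_le_two_exp _
      calc (1+x)^(n-s) - (1-x)^(n-s) ≤ (1+x)^(n-s) := by linarith
        _ ≤ (2 * exp (-((1-x)/2)))^(n-s) := h2
        _ = 2^(n-s) * exp (-(((n-s:ℕ):ℝ)*(1-x)/2)) := by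
            rw [mul_pow, ← Real.exp_nat_mul]; ring_nf
    have hEE : (19/20)*(n:ℝ)*w/2 ≤ ((n-s:ℕ):ℝ)*(1-x)/2 := by
      have : (19/20)*(n:ℝ)*w ≤ ((n-s:ℕ):ℝ)*(1-x) :=
        mul_le_mul hm hw hw0 (by positivity)
      linarith
    calc (n.choose s : ℝ)/2^n * ((1+x)^(n-s) - (1-x)^(n-s))
        ≤ (n.choose s : ℝ)/2^n * (2^(n-s) * exp (-(((n-s:ℕ):ℝ)*(1-x)/2))) := by
          apply mul_le_mul_of_nonneg_left hbr (by positivity)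
      _ = (n.choose s : ℝ) * ((2:ℝ)^(n-s)/2^n) * exp (-(((n-s:ℕ):ℝ)*(1-x)/2)) := by ring
      _ ≤ exp ((s:ℝ) * Real.log y) * exp (-((19/20)*(n:ℝ)*w/2)) := by
          apply mul_le_mul hchy ?_ (exp_pos _).le (exp_pos _).le
          apply Real.exp_le_exp.mpr; linarith
  rcases le_or_gt ((s:ℝ)*p) 1 with hsple | hspge
  · -- low case : s*p ≤ 1
    have bl := bern_lower hp0 hp1 s
    have hA : (s:ℝ)*p ≤ (1-x)*(1+(s:ℝ)*p) := by nlinarith [bl]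
    have hw : (s:ℝ)*p/2 ≤ 1 - x := by nlinarith [hA]
    have hterm := hEbound ((s:ℝ)*p/2) hw (by positivity)
    have hexpo : (s:ℝ)*Real.log y + (-((19/20)*(n:ℝ)*((s:ℝ)*p/2)/2)) ≤ -(δ/(4*(2+ε)) * n) := by
      have hsp : (s:ℝ)*p = (s:ℝ)*((2+ε)*L)/n := by rw [hp]; ring
      have hnp : (19/20)*(n:ℝ)*((s:ℝ)*p/2)/2 = (19/80)*((s:ℝ)*((2+ε)*L)) := by
        rw [hsp]; field_simp; ring
      have hsL2 : (19/40)*((s:ℝ)*L) ≤ (19/80)*((s:ℝ)*((2+ε)*L)) := by nlinarith [mul_nonneg hs0.le hL0.le]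
      have hylog : Real.log y ≤ L/5 := by
        refine le_trans (Real.log_le_log hy0 ?_) hC5
        rw [hy, div_le_iff₀ (by positivity)]
        have heq : exp 1*(2+ε)/(2*δ)*L*(2*(s:ℝ)) = (exp 1/δ)*((s:ℝ)*((2+ε)*L)) := by
          field_simp
        rw [heq]
        calc exp 1 * (n:ℝ) = (exp 1/δ)*(δ*n) := by field_simp
          _ ≤ (exp 1/δ)*((s:ℝ)*((2+ε)*L)) :=
              mul_le_mul_of_nonneg_left hsgt.le (by positivity)
      have hsLy : (s:ℝ)*Real.log y ≤ (s:ℝ)*L/5 := by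
        calc (s:ℝ)*Real.log y ≤ (s:ℝ)*(L/5) := mul_le_mul_of_nonneg_left hylog hs0.le
          _ = (s:ℝ)*L/5 := by ring
      have hsLn : δ*n/(2+ε) ≤ (s:ℝ)*L := by
        rw [div_le_iff₀ h2ε]
        nlinarith [hsgt]
      have : (s:ℝ)*L/5 - (19/40)*((s:ℝ)*L) ≤ -(1/4)*((s:ℝ)*L) := by nlinarith [mul_nonneg hs0.le hL0.le]
      have h9 : -(1/4)*((s:ℝ)*L) ≤ -(1/4)*(δ*n/(2+ε)) := by nlinarith [hsLn]
      have h10 : -(1/4)*(δ*n/(2+ε)) = -(δ/(4*(2+ε)) * n) := by field_simp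
      nlinarith [hsLy, hsL2, hnp]
    calc (n.choose s : ℝ)/2^n * ((1+x)^(n-s) - (1-x)^(n-s))
        ≤ exp ((s:ℝ)*Real.log y) * exp (-((19/20)*(n:ℝ)*((s:ℝ)*p/2)/2)) := hterm
      _ = exp ((s:ℝ)*Real.log y + (-((19/20)*(n:ℝ)*((s:ℝ)*p/2)/2))) := by rw [Real.exp_add]
      _ ≤ exp (-(δ/(4*(2+ε)) * n)) := Real.exp_le_exp.mpr hexpo
      _ ≤ exp (-(δ/(4*(2+ε)) * n)) + exp (-((1/40) * n)) := le_add_of_nonneg_right (exp_pos _).le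
  · -- high case : s*p ≥ 1
    have hxe : x ≤ exp (-((s:ℝ)*p)) := bern_upper hp1 s
    have hxhalf : x ≤ 1/2 := by
      have h1 : exp (-((s:ℝ)*p)) ≤ exp (-1) := Real.exp_le_exp.mpr (by linarith)
      have h2 : exp (-1:ℝ) ≤ 1/2 := by
        have h3 : (2:ℝ) ≤ exp 1 := by nlinarith [Real.add_one_le_exp (1:ℝ)]
        rw [Real.exp_neg, show (1/2:ℝ) = 2⁻¹ by norm_num]
        exact inv_anti₀ (by norm_num) h3
      linarith
    have hterm := hEbound (1/2) (by linarith) (by norm_num)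
    have hsLy := sLp_bound hs1 hrn0 hsz
    have hexpo : (s:ℝ)*Real.log y + (-((19/20)*(n:ℝ)*(1/2)/2)) ≤ -((1/40) * n) := by
      have : (19/20)*(n:ℝ)*(1/2)/2 = (19/80)*n := by ring
      nlinarith [hsLy]
    calc (n.choose s : ℝ)/2^n * ((1+x)^(n-s) - (1-x)^(n-s))
        ≤ exp ((s:ℝ)*Real.log y) * exp (-((19/20)*(n:ℝ)*(1/2)/2)) := hterm
      _ = exp ((s:ℝ)*Real.log y + (-((19/20)*(n:ℝ)*(1/2)/2))) := by rw [Real.exp_add]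
      _ ≤ exp (-((1/40) * n)) := Real.exp_le_exp.mpr hexpo
      _ ≤ exp (-(δ/(4*(2+ε)) * n)) + exp (-((1/40) * n)) := le_add_of_nonneg_left (exp_pos _).le

theorem termIIb {ε β c₂ p L : ℝ} {n s s₂ : ℕ}
    (hε : 0 < ε) (hβ0 : 0 < β) (hβ : β < 1/2)
    (hc₂ : c₂ = Real.log 2 + β*Real.log β + (1-β)*Real.log (1-β))
    (hL1 : 1 ≤ L) (hLlog : L = Real.log n)
    (hp : p = (2+ε)*L/n) (hp1 : p ≤ 1)
    (hs1 : 1 ≤ s) (hsn : s ≤ n)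
    (hzlt : (n:ℝ)/20 < s)
    (hchoose : n.choose s ≤ n.choose s₂)
    (hs₂l : β*n ≤ (s₂:ℝ)) (hs₂n : s₂ ≤ n) (hs₂u : (s₂:ℝ) ≤ β*n+1)
    (hC6 : 2*(n:ℝ)*exp (exp ((9/10)*L)) ≤ β*exp (c₂*(n:ℝ)/2)) :
    (n.choose s : ℝ)/2^n * ((1+(1-p)^s)^(n-s) - (1-(1-p)^s)^(n-s))
      ≤ exp (-(c₂/2 * n)) := by
  have hn1 : 1 ≤ n := le_trans hs1 hsn
  have hrn0 : (0:ℝ) < n := by exact_mod_cast hn1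
  have hs0 : (0:ℝ) < s := by exact_mod_cast hs1
  have h2ε : (0:ℝ) < 2 + ε := by linarith
  have hL0 : 0 < L := by linarith
  have hp0 : 0 ≤ p := by rw [hp]; positivity
  have hβ1 : β < 1 := by linarith
  have h1β : 0 < 1 - β := by linarith
  set x : ℝ := (1-p)^s with hxdef
  have hx0 : 0 ≤ x := pow_nonneg (by linarith) s
  have hx1 : x ≤ 1 := pow_le_one₀ (by linarith) (by linarith)
  have hexpL : Real.exp L = n := by rw [hLlog]; exact Real.exp_log hrn0
  have hmcast : ((n-s:ℕ):ℝ) = (n:ℝ) - s := Nat.cast_sub hsn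
  -- x is small : x ≤ exp(-(L/10))
  have hxe : x ≤ exp (-((s:ℝ)*p)) := bern_upper hp1 s
  have hsp : L/10 ≤ (s:ℝ)*p := by
    rw [hp]
    rw [show (s:ℝ)*((2+ε)*L/(n:ℝ)) = (s:ℝ)*((2+ε)*L)/n from by ring, le_div_iff₀ hrn0]
    have h1 : (n:ℝ)/20*(2*L) ≤ (s:ℝ)*((2+ε)*L) := by
      apply mul_le_mul hzlt.le (by nlinarith) (by positivity) hs0.le
    nlinarith
  have hxsmall : x ≤ exp (-(L/10)) := le_trans hxe (by apply Real.exp_le_exp.mpr; linarith)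
  -- bracket bound via diff_pow_le
  have hbr : (1+x)^(n-s) - (1-x)^(n-s) ≤ 2*(n:ℝ)*exp (exp ((9/10)*L)) := by
    have h1 := diff_pow_le hx0 hx1 (n-s)
    have h1x : (1+x)^(n-s) ≤ exp ((n:ℝ)*x) := by
      calc (1+x)^(n-s) ≤ (exp x)^(n-s) :=
            pow_le_pow_left₀ (by linarith) (by nlinarith [Real.add_one_le_exp x]) _
        _ = exp (((n-s:ℕ):ℝ)*x) := by rw [← Real.exp_nat_mul]
        _ ≤ exp ((n:ℝ)*x) := by
            apply Real.exp_le_exp.mpr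
            apply mul_le_mul_of_nonneg_right ?_ hx0
            rw [hmcast]; linarith
    have hnx : (n:ℝ)*x ≤ exp ((9/10)*L) := by
      calc (n:ℝ)*x ≤ (n:ℝ)*exp (-(L/10)) := mul_le_mul_of_nonneg_left hxsmall hrn0.le
        _ = exp (L + -(L/10)) := by rw [Real.exp_add, hexpL]
        _ = exp ((9/10)*L) := by ring_nf
    have hms : ((n-s:ℕ):ℝ) ≤ n := by rw [hmcast]; linarith
    calc (1+x)^(n-s) - (1-x)^(n-s) ≤ 2*((n-s:ℕ):ℝ)*x*(1+x)^(n-s) := h1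
      _ ≤ 2*(n:ℝ)*1*exp (exp ((9/10)*L)) := by
          apply mul_le_mul ?_ ?_ (by positivity) (by positivity)
          · apply mul_le_mul ?_ hx1 hx0 (by positivity)
            apply mul_le_mul_of_nonneg_left hms (by norm_num)
          · exact le_trans h1x (Real.exp_le_exp.mpr hnx)
      _ = 2*(n:ℝ)*exp (exp ((9/10)*L)) := by ring
  have hbr0 : 0 ≤ (1+x)^(n-s) - (1-x)^(n-s) := by
    have : (1-x)^(n-s) ≤ (1+x)^(n-s) := pow_le_pow_left₀ (by linarith) (by linarith) _
    linarith
  -- choose bound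
  have hthet := choose_theta n s₂ hs₂n (le_of_lt hβ0) (le_of_lt hβ1)
  have hbpow : (0:ℝ) < β^s₂ * (1-β)^(n-s₂) := by positivity
  have hch2 : (n.choose s₂ : ℝ) ≤ 1/(β^s₂ * (1-β)^(n-s₂)) :=
    (le_div_iff₀ hbpow).mpr (by linarith [hthet])
  have hlogβ : Real.log β < 0 := Real.log_neg hβ0 hβ1
  have hlog1β : Real.log (1-β) < 0 := Real.log_neg h1β (by linarith)
  have hm2cast : ((n-s₂:ℕ):ℝ) = (n:ℝ) - s₂ := Nat.cast_sub hs₂n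
  have eβ : β^s₂ = exp ((s₂:ℝ)*Real.log β) := by
    rw [show (s₂:ℝ)*Real.log β = ((s₂:ℕ):ℝ)*Real.log β from by norm_cast, Real.exp_nat_mul,
      Real.exp_log hβ0]
  have e1β : (1-β)^(n-s₂) = exp (((n-s₂:ℕ):ℝ)*Real.log (1-β)) := by
    rw [Real.exp_nat_mul, Real.exp_log h1β]
  have e2 : (2:ℝ)^n = exp ((n:ℝ)*Real.log 2) := by
    rw [Real.exp_nat_mul, Real.exp_log (by norm_num : (0:ℝ) < 2)]
  have hexpo : -((s₂:ℝ)*Real.log β + ((n-s₂:ℕ):ℝ)*Real.log (1-β) + (n:ℝ)*Real.log 2)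
      ≤ -(c₂*n) + -(Real.log β) := by
    have k1 : (β*(n:ℝ)+1)*Real.log β ≤ (s₂:ℝ)*Real.log β :=
      mul_le_mul_of_nonpos_right hs₂u hlogβ.le
    have k2 : (1-β)*(n:ℝ)*Real.log (1-β) ≤ ((n-s₂:ℕ):ℝ)*Real.log (1-β) := by
      apply mul_le_mul_of_nonpos_right ?_ hlog1β.le
      rw [hm2cast]; linarith
    rw [hc₂]; nlinarith [k1, k2]
  have hchn : (n.choose s : ℝ)/2^n ≤ exp (-(c₂*n)) * (1/β) := by
    have hc1 : (n.choose s : ℝ) ≤ (n.choose s₂ : ℝ) := by exact_mod_cast hchoose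
    calc (n.choose s : ℝ)/2^n ≤ (n.choose s₂ : ℝ)/2^n := by
          apply div_le_div_of_nonneg_right hc1 (by positivity)
      _ ≤ (1/(β^s₂ * (1-β)^(n-s₂)))/2^n := by
          apply div_le_div_of_nonneg_right hch2 (by positivity)
      _ = exp (-((s₂:ℝ)*Real.log β + ((n-s₂:ℕ):ℝ)*Real.log (1-β) + (n:ℝ)*Real.log 2)) := by
          rw [eβ, e1β, e2, ← Real.exp_add, one_div, ← Real.exp_neg, div_eq_mul_inv,
            ← Real.exp_neg, ← Real.exp_add]
          congr 1; ring
      _ ≤ exp (-(c₂*n) + -(Real.log β)) := Real.exp_le_exp.mpr hexpo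
      _ = exp (-(c₂*n)) * (1/β) := by
          rw [Real.exp_add, Real.exp_neg (Real.log β), Real.exp_log hβ0, one_div]
  -- combine
  have hchn0 : (0:ℝ) ≤ (n.choose s : ℝ)/2^n := by positivity
  calc (n.choose s : ℝ)/2^n * ((1+x)^(n-s) - (1-x)^(n-s))
      ≤ (n.choose s : ℝ)/2^n * (2*(n:ℝ)*exp (exp ((9/10)*L))) :=
        mul_le_mul_of_nonneg_left hbr hchn0
    _ ≤ (exp (-(c₂*n)) * (1/β)) * (β*exp (c₂*(n:ℝ)/2)) := by
        apply mul_le_mul hchn hC6 (by positivity) (by positivity)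
    _ = exp (-(c₂*n)) * exp (c₂*(n:ℝ)/2) := by
        field_simp
    _ = exp (-(c₂/2 * n)) := by
        rw [← Real.exp_add]; congr 1; ring

theorem termIII {ε p L : ℝ} {n s : ℕ}
    (hε : 0 < ε)
    (hL1 : 1 ≤ L) (hLlog : L = Real.log n)
    (hp : p = (2+ε)*L/n) (hp1 : p ≤ 1)
    (hn1 : 1 ≤ n) (hsn : s ≤ n)
    (hsβ : (1+ε/4)*L ≤ (s:ℝ)*p) :
    (n.choose s : ℝ)/2^n * ((1+(1-p)^s)^(n-s) - (1-(1-p)^s)^(n-s))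
      ≤ (n.choose s : ℝ)/2^n * (2*exp 1 * exp (-(ε/4*L))) := by
  have hrn0 : (0:ℝ) < n := by exact_mod_cast hn1
  have h2ε : (0:ℝ) < 2 + ε := by linarith
  have hL0 : 0 < L := by linarith
  have hp0 : 0 ≤ p := by rw [hp]; positivity
  set x : ℝ := (1-p)^s with hxdef
  have hx0 : 0 ≤ x := pow_nonneg (by linarith) s
  have hx1 : x ≤ 1 := pow_le_one₀ (by linarith) (by linarith)
  have hexpL : Real.exp L = n := by rw [hLlog]; exact Real.exp_log hrn0
  have hmcast : ((n-s:ℕ):ℝ) = (n:ℝ) - s := Nat.cast_sub hsn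
  have hsc0 : (0:ℝ) ≤ s := Nat.cast_nonneg s
  have hms : ((n-s:ℕ):ℝ) ≤ n := by rw [hmcast]; linarith
  have hm0 : (0:ℝ) ≤ ((n-s:ℕ):ℝ) := Nat.cast_nonneg _
  have hxe : x ≤ exp (-((s:ℝ)*p)) := bern_upper hp1 s
  have hxsmall : x ≤ exp (-((1+ε/4)*L)) :=
    le_trans hxe (Real.exp_le_exp.mpr (by linarith))
  have hnx : ((n-s:ℕ):ℝ)*x ≤ exp (-(ε/4*L)) := by
    calc ((n-s:ℕ):ℝ)*x ≤ (n:ℝ)*exp (-((1+ε/4)*L)) :=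
          mul_le_mul hms hxsmall hx0 hrn0.le
      _ = exp (L + -((1+ε/4)*L)) := by rw [Real.exp_add, hexpL]
      _ = exp (-(ε/4*L)) := by congr 1; ring
  have hnx1 : ((n-s:ℕ):ℝ)*x ≤ 1 := by
    refine le_trans hnx ?_
    rw [show (1:ℝ) = exp 0 from (Real.exp_zero).symm]
    apply Real.exp_le_exp.mpr
    nlinarith
  have h1x : (1+x)^(n-s) ≤ exp 1 := by
    calc (1+x)^(n-s) ≤ (exp x)^(n-s) :=
          pow_le_pow_left₀ (by linarith) (by nlinarith [Real.add_one_le_exp x]) _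
      _ = exp (((n-s:ℕ):ℝ)*x) := by rw [← Real.exp_nat_mul]
      _ ≤ exp 1 := Real.exp_le_exp.mpr hnx1
  have hbr : (1+x)^(n-s) - (1-x)^(n-s) ≤ 2*exp 1 * exp (-(ε/4*L)) := by
    calc (1+x)^(n-s) - (1-x)^(n-s) ≤ 2*((n-s:ℕ):ℝ)*x*(1+x)^(n-s) := diff_pow_le hx0 hx1 _
      _ = 2*(((n-s:ℕ):ℝ)*x)*(1+x)^(n-s) := by ring
      _ ≤ 2*(exp (-(ε/4*L)))*exp 1 := by
          apply mul_le_mul ?_ h1x (by positivity) (by positivity)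
          apply mul_le_mul_of_nonneg_left hnx (by norm_num)
      _ = 2*exp 1 * exp (-(ε/4*L)) := by ring
  exact mul_le_mul_of_nonneg_left hbr (by positivity)

lemma ev_log (K : ℝ) (hK : 0 < K) : ∀ᶠ n:ℕ in atTop, Real.log n ≤ K * n := by
  have h := Real.isLittleO_log_id_atTop.def hK
  filter_upwards [tendsto_natCast_atTop_atTop.eventually h] with n hn
  simp only [id] at hn
  have h1 : Real.log n ≤ ‖Real.log n‖ := le_abs_self _
  have h2 : ‖(n:ℝ)‖ = (n:ℝ) := abs_of_nonneg (Nat.cast_nonneg n)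
  rw [h2] at hn
  linarith

lemma ev_logKy (K : ℝ) (hK : 0 < K) : ∀ᶠ y:ℝ in atTop, Real.log (K*y) ≤ y/5 := by
  have h := Real.isLittleO_log_id_atTop.def (show (0:ℝ) < 1/10 by norm_num)
  filter_upwards [h, eventually_ge_atTop (1:ℝ), eventually_ge_atTop (10*Real.log K)]
    with y h1 h2 h3
  have hy0 : 0 < y := by linarith
  rw [Real.log_mul (ne_of_gt hK) (ne_of_gt hy0)]
  simp only [id] at h1
  have h4 : Real.log y ≤ ‖Real.log y‖ := le_abs_self _
  have h5 : ‖y‖ = y := abs_of_nonneg hy0.le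
  rw [h5] at h1
  linarith

/-- For every `ε > 0` there are constants `C, c > 0` such that for all sufficiently
large `n`, with `p = (2+ε) log n / n`, `S(n,p) ≤ C n^{-ε/4} + C e^{-c n}`. -/
theorem stmt17 (ε : ℝ) (hε : 0 < ε) :
    ∃ C c : ℝ, 0 < C ∧ 0 < c ∧ ∃ N : ℕ, ∀ n : ℕ, N ≤ n →
      Sfun n ((2 + ε) * Real.log n / n) ≤
        C * (n : ℝ) ^ (-(ε / 4)) + C * Real.exp (-(c * n)) := by
  classical
  have h2ε : (0:ℝ) < 2 + ε := by linarith
  -- constants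
  set δ : ℝ := min ε 1 / 12 with hδdef
  have hδ0 : 0 < δ := by
    have : 0 < min ε 1 := lt_min hε one_pos
    rw [hδdef]; linarith
  have hδ1 : δ ≤ 1/12 := by
    have : min ε 1 ≤ 1 := min_le_right _ _
    rw [hδdef]; linarith
  have hδε : δ*(4*(2+ε)) ≤ ε := by
    rcases le_total ε 1 with h | h
    · rw [hδdef, min_eq_left h]; nlinarith
    · rw [hδdef, min_eq_right h]; nlinarith
  have hkey : 2 + ε/2 ≤ (2+ε)*(1-δ)^2 := by
    nlinarith [mul_nonneg h2ε.le (sq_nonneg δ), hδε, hδ0]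
  set β : ℝ := (1+ε/4)/(2+ε) with hβdef
  have hβ0 : 0 < β := by rw [hβdef]; positivity
  have hβ : β < 1/2 := by rw [hβdef, div_lt_iff₀ h2ε]; linarith
  have hβ4 : 1/4 ≤ β := by rw [hβdef, le_div_iff₀ h2ε]; linarith
  set c₂ : ℝ := Real.log 2 + β*Real.log β + (1-β)*Real.log (1-β) with hc₂def
  have hc₂0 : 0 < c₂ := kl_pos hβ0 hβ
  set c₁ : ℝ := δ/(4*(2+ε)) with hc₁def
  have hc₁0 : 0 < c₁ := by rw [hc₁def]; positivity
  set a : ℝ := min c₁ (1/40) with hadef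
  have ha0 : 0 < a := lt_min hc₁0 (by norm_num)
  set c : ℝ := min a (c₂/2) / 2 with hcdef
  have hc0 : 0 < c := by
    have : 0 < min a (c₂/2) := lt_min ha0 (by positivity)
    rw [hcdef]; linarith
  have h2c : 2*c = min a (c₂/2) := by rw [hcdef]; ring
  have h2ca : 2*c ≤ a := h2c ▸ min_le_left _ _
  have h2cc₂ : 2*c ≤ c₂/2 := h2c ▸ min_le_right _ _
  have h2c₁ : 2*c ≤ c₁ := le_trans h2ca (min_le_left _ _)
  have h2c40 : 2*c ≤ 1/40 := le_trans h2ca (min_le_right _ _)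
  refine ⟨10, c, by norm_num, hc0, ?_⟩
  -- eventually facts
  have hLt : Tendsto (fun n:ℕ => Real.log n) atTop atTop :=
    Real.tendsto_log_atTop.comp tendsto_natCast_atTop_atTop
  have E1 : ∀ᶠ n:ℕ in atTop, 114 ≤ n := eventually_ge_atTop 114
  have E2 : ∀ᶠ n:ℕ in atTop, 1 ≤ Real.log n := hLt.eventually_ge_atTop 1
  have E3 : ∀ᶠ n:ℕ in atTop, Real.log n ≤ (1/(2+ε))*n := ev_log _ (by positivity)
  have E4 : ∀ᶠ n:ℕ in atTop,
      Real.log (Real.exp 1*(2+ε)/(2*δ) * Real.log n) ≤ Real.log n/5 :=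
    hLt.eventually (ev_logKy _ (by positivity))
  have E5 : ∀ᶠ n:ℕ in atTop, 1/(1-2*β) ≤ (n:ℝ) :=
    tendsto_natCast_atTop_atTop.eventually_ge_atTop _
  have E7 : ∀ᶠ n:ℕ in atTop, Real.log n ≤ c*n := ev_log c hc0
  have E6a : ∀ᶠ n:ℕ in atTop, 10*Real.log (8/c₂) ≤ Real.log n := hLt.eventually_ge_atTop _
  have E6b : ∀ᶠ n:ℕ in atTop, Real.log n ≤ (c₂/8)*n := ev_log _ (by positivity)
  have E6c : ∀ᶠ n:ℕ in atTop, (Real.log 2 - Real.log β)*(8/c₂) ≤ (n:ℝ) :=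
    tendsto_natCast_atTop_atTop.eventually_ge_atTop _
  obtain ⟨N, hN⟩ := eventually_atTop.mp
    ((((((E1.and E2).and E3).and E4).and E5).and E7).and ((E6a.and E6b).and E6c))
  refine ⟨N, ?_⟩
  intro n hn
  obtain ⟨⟨⟨⟨⟨⟨h114, hL1⟩, hE3⟩, hE4⟩, hE5⟩, hE7⟩, ⟨hE6a, hE6b⟩, hE6c⟩ := hN n hn
  -- setup
  have hn1 : 1 ≤ n := by omega
  have hrn0 : (0:ℝ) < n := by exact_mod_cast hn1
  have hrn114 : (114:ℝ) ≤ n := by exact_mod_cast h114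
  simp only [Sfun]
  set L : ℝ := Real.log n with hLdef
  set p : ℝ := (2+ε)*L/(n:ℝ) with hpdef
  have hL0 : (0:ℝ) < L := by linarith
  have hp1 : p ≤ 1 := by
    rw [hpdef, div_le_one hrn0]
    have heq : (2+ε)*((1/(2+ε))*(n:ℝ)) = n := by field_simp
    linarith [mul_le_mul_of_nonneg_left hE3 h2ε.le, heq]
  have hp0 : 0 ≤ p := by rw [hpdef]; positivity
  have hexpL : Real.exp L = n := Real.exp_log hrn0
  have h2εL : (2:ℝ) ≤ (2+ε)*L := by
    have := mul_le_mul (by linarith : (2:ℝ) ≤ 2+ε) hL1 (by norm_num) (by linarith)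
    simpa using this
  set s₀ : ℕ := ⌊δ*(n:ℝ)/((2+ε)*L)⌋₊ with hs₀def
  set z : ℕ := n/20 with hzdef
  set s₂ : ℕ := ⌈β*(n:ℝ)⌉₊ with hs₂def
  have hfl : (s₀:ℝ) ≤ δ*(n:ℝ)/((2+ε)*L) := Nat.floor_le (by positivity)
  have hzlb : (n:ℝ) - 19 ≤ 20*(z:ℝ) := by
    have h1 : n ≤ 20*z + 19 := by omega
    have h2 : (n:ℝ) ≤ 20*(z:ℝ) + 19 := by exact_mod_cast h1
    linarith
  have hzub : (z:ℝ) ≤ (n:ℝ)/20 := by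
    have h1 : 20*z ≤ n := by omega
    have h2 : 20*(z:ℝ) ≤ n := by exact_mod_cast h1
    linarith
  have hs₀z : s₀ ≤ z := by
    have h1 : δ*(n:ℝ)/((2+ε)*L) ≤ (n:ℝ)/24 := by
      rw [div_le_div_iff₀ (by linarith) (by norm_num)]
      have k1 : δ*24*(n:ℝ) ≤ 2*(n:ℝ) :=
        mul_le_mul_of_nonneg_right (by linarith : δ*24 ≤ 2) hrn0.le
      have k2 : 2*(n:ℝ) ≤ ((2+ε)*L)*(n:ℝ) :=
        mul_le_mul_of_nonneg_right h2εL hrn0.le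
      nlinarith [k1, k2]
    have h2 : (n:ℝ)/24 ≤ ((n:ℝ)-19)/20 := by
      rw [div_le_div_iff₀ (by norm_num) (by norm_num)]; linarith
    have h3 : (s₀:ℝ) ≤ (z:ℝ) := by linarith
    exact_mod_cast h3
  have hzs₂ : z ≤ s₂ := by
    have h1 : (z:ℝ) ≤ β*(n:ℝ) := by
      have k1 : (1/4)*(n:ℝ) ≤ β*(n:ℝ) := mul_le_mul_of_nonneg_right hβ4 hrn0.le
      linarith
    have h2 : (z:ℝ) ≤ (s₂:ℝ) := le_trans h1 (Nat.le_ceil _)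
    exact_mod_cast h2
  have hs₂n : s₂ ≤ n := by
    rw [hs₂def]
    refine Nat.ceil_le.mpr ?_
    have k1 : β*(n:ℝ) ≤ 1*(n:ℝ) := mul_le_mul_of_nonneg_right (by linarith : β ≤ 1) hrn0.le
    linarith
  have hs₂l : β*(n:ℝ) ≤ (s₂:ℝ) := Nat.le_ceil _
  have hs₂u : (s₂:ℝ) ≤ β*(n:ℝ)+1 := (Nat.ceil_lt_add_one (by positivity)).le
  have h2s₂ : 2*s₂ ≤ n + 1 := by
    have h12β : (0:ℝ) < 1-2*β := by linarith
    have h1 : (1:ℝ) ≤ (1-2*β)*(n:ℝ) := by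
      have := (div_le_iff₀ h12β).mp hE5
      linarith
    have h2 : 2*(s₂:ℝ) ≤ (n:ℝ)+1 := by linarith
    exact_mod_cast h2
  -- C6 condition
  have hC6 : 2*(n:ℝ)*Real.exp (Real.exp ((9/10)*L)) ≤ β*Real.exp (c₂*(n:ℝ)/2) := by
    have k1 : Real.exp ((9/10)*L) ≤ (c₂/8)*(n:ℝ) := by
      have e1 : Real.exp ((9/10)*L) = (n:ℝ) * Real.exp (-(L/10)) := by
        rw [← hexpL, ← Real.exp_add]; congr 1; ring
      rw [e1]
      have h8 : Real.exp (-(L/10)) ≤ c₂/8 := by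
        have e : Real.log (8/c₂) = - Real.log (c₂/8) := by
          rw [← Real.log_inv]; congr 1
          rw [inv_div]
        have h9 : -(L/10) ≤ Real.log (c₂/8) := by
          rw [e] at hE6a; linarith
        calc Real.exp (-(L/10)) ≤ Real.exp (Real.log (c₂/8)) := Real.exp_le_exp.mpr h9
          _ = c₂/8 := Real.exp_log (by positivity)
      linarith [mul_le_mul_of_nonneg_left h8 hrn0.le]
    have k3 : Real.log 2 - Real.log β ≤ (c₂/8)*(n:ℝ) := by
      have h10 := mul_le_mul_of_nonneg_right hE6c (show (0:ℝ) ≤ c₂/8 by positivity)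
      have e : (Real.log 2 - Real.log β)*(8/c₂)*(c₂/8) = Real.log 2 - Real.log β := by
        field_simp
      rw [e] at h10
      linarith
    calc 2*(n:ℝ)*Real.exp (Real.exp ((9/10)*L))
        = Real.exp (Real.log 2 + L + Real.exp ((9/10)*L)) := by
          rw [Real.exp_add, Real.exp_add, Real.exp_log (by norm_num : (0:ℝ) < 2), hexpL]
      _ ≤ Real.exp (Real.log β + c₂*(n:ℝ)/2) := by
          apply Real.exp_le_exp.mpr
          linarith
      _ = β * Real.exp (c₂*(n:ℝ)/2) := by rw [Real.exp_add, Real.exp_log hβ0]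
  -- the summand
  set F : ℕ → ℝ := fun s => (n.choose s:ℝ)/2^n * ((1+(1-p)^s)^(n-s) - (1-(1-p)^s)^(n-s)) with hF
  have hIcc : Finset.Icc 1 n = Finset.Ioc 0 n := Finset.Icc_add_one_left_eq_Ioc 0 n
  rw [hIcc]
  have hsplit1 : ∑ s ∈ Finset.Ioc 0 s₀, F s + ∑ s ∈ Finset.Ioc s₀ z, F s
      = ∑ s ∈ Finset.Ioc 0 z, F s := Finset.sum_Ioc_consecutive _ (Nat.zero_le _) hs₀z
  have hsplit2 : ∑ s ∈ Finset.Ioc 0 z, F s + ∑ s ∈ Finset.Ioc z s₂, F s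
      = ∑ s ∈ Finset.Ioc 0 s₂, F s := Finset.sum_Ioc_consecutive _ (Nat.zero_le _) hzs₂
  have hsplit3 : ∑ s ∈ Finset.Ioc 0 s₂, F s + ∑ s ∈ Finset.Ioc s₂ n, F s
      = ∑ s ∈ Finset.Ioc 0 n, F s := Finset.sum_Ioc_consecutive _ (Nat.zero_le _) hs₂n
  -- region I
  have hS1 : ∑ s ∈ Finset.Ioc 0 s₀, F s ≤ Real.exp (-(ε/4*L)) := by
    have hterm : ∀ s ∈ Finset.Ioc 0 s₀, F s ≤ (1/2:ℝ)^s * Real.exp (-(ε/4*L)) := by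
      intro s hs
      rw [Finset.mem_Ioc] at hs
      have hs1 : 1 ≤ s := hs.1
      have hsn : s ≤ n := le_trans hs.2 (le_trans hs₀z (le_trans hzs₂ hs₂n))
      have hsle : (s:ℝ)*((2+ε)*L) ≤ δ*(n:ℝ) := by
        have h1 : (s:ℝ) ≤ (s₀:ℝ) := by exact_mod_cast hs.2
        have h2 : (s:ℝ) ≤ δ*(n:ℝ)/((2+ε)*L) := le_trans h1 hfl
        rw [← le_div_iff₀ (by linarith : (0:ℝ) < (2+ε)*L)]
        exact h2
      exact termI hε hδ0 hδ1 hkey hL1 hLdef hpdef hp1 hs1 hsn hsle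
    calc ∑ s ∈ Finset.Ioc 0 s₀, F s
        ≤ ∑ s ∈ Finset.Ioc 0 s₀, (1/2:ℝ)^s * Real.exp (-(ε/4*L)) := Finset.sum_le_sum hterm
      _ = (∑ s ∈ Finset.Ioc 0 s₀, (1/2:ℝ)^s) * Real.exp (-(ε/4*L)) :=
          (Finset.sum_mul _ _ _).symm
      _ ≤ 1 * Real.exp (-(ε/4*L)) :=
          mul_le_mul_of_nonneg_right (geom_Ioc s₀) (Real.exp_pos _).le
      _ = Real.exp (-(ε/4*L)) := one_mul _
  -- region IIa
  have hS2 : ∑ s ∈ Finset.Ioc s₀ z, F s ≤ (n:ℝ) * (2*Real.exp (-(2*c*(n:ℝ)))) := by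
    have hterm : ∀ s ∈ Finset.Ioc s₀ z, F s ≤ 2*Real.exp (-(2*c*(n:ℝ))) := by
      intro s hs
      rw [Finset.mem_Ioc] at hs
      have hs1 : 1 ≤ s := by omega
      have hsn : s ≤ n := le_trans hs.2 (le_trans hzs₂ hs₂n)
      have hsgt : δ*(n:ℝ) < (s:ℝ)*((2+ε)*L) := by
        have h1 : δ*(n:ℝ)/((2+ε)*L) < (s₀:ℝ)+1 := Nat.lt_floor_add_one _
        have h2 : (s₀:ℝ)+1 ≤ (s:ℝ) := by
          have : s₀+1 ≤ s := hs.1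
          exact_mod_cast this
        have h3 : δ*(n:ℝ)/((2+ε)*L) < (s:ℝ) := by linarith
        have h4 := (div_lt_iff₀ (by linarith : (0:ℝ) < (2+ε)*L)).mp h3
        linarith
      have hsz : (s:ℝ) ≤ (n:ℝ)/20 := by
        have h1 : (s:ℝ) ≤ (z:ℝ) := by exact_mod_cast hs.2
        linarith
      have := termIIa hε hδ0 hδ1 hL1 hLdef hpdef hp1 hs1 hsn hsgt hsz hE4
      have hb1 : Real.exp (-(δ/(4*(2+ε)) * (n:ℝ))) ≤ Real.exp (-(2*c*(n:ℝ))) := by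
        apply Real.exp_le_exp.mpr
        have h2c' : 2*c ≤ δ/(4*(2+ε)) := by rw [← hc₁def]; exact h2c₁
        linarith [mul_le_mul_of_nonneg_right h2c' hrn0.le]
      have hb2 : Real.exp (-((1/40) * (n:ℝ))) ≤ Real.exp (-(2*c*(n:ℝ))) := by
        apply Real.exp_le_exp.mpr
        linarith [mul_le_mul_of_nonneg_right h2c40 hrn0.le]
      calc F s ≤ Real.exp (-(δ/(4*(2+ε)) * (n:ℝ))) + Real.exp (-((1/40) * (n:ℝ))) := this
        _ ≤ 2*Real.exp (-(2*c*(n:ℝ))) := by linarith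
    calc ∑ s ∈ Finset.Ioc s₀ z, F s
        ≤ (Finset.Ioc s₀ z).card • (2*Real.exp (-(2*c*(n:ℝ)))) :=
          Finset.sum_le_card_nsmul _ _ _ hterm
      _ = ((Finset.Ioc s₀ z).card : ℝ) * (2*Real.exp (-(2*c*(n:ℝ)))) := nsmul_eq_mul _ _
      _ ≤ (n:ℝ) * (2*Real.exp (-(2*c*(n:ℝ)))) := by
          apply mul_le_mul_of_nonneg_right ?_ (by positivity)
          rw [Nat.card_Ioc]
          have : z - s₀ ≤ n := by omega
          exact_mod_cast this
  -- region IIb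
  have hS3 : ∑ s ∈ Finset.Ioc z s₂, F s ≤ (n:ℝ) * Real.exp (-(2*c*(n:ℝ))) := by
    have hterm : ∀ s ∈ Finset.Ioc z s₂, F s ≤ Real.exp (-(2*c*(n:ℝ))) := by
      intro s hs
      rw [Finset.mem_Ioc] at hs
      have hs1 : 1 ≤ s := by omega
      have hsn : s ≤ n := le_trans hs.2 hs₂n
      have hzlt : (n:ℝ)/20 < (s:ℝ) := by
        have h1 : n < 20*(z+1) := by omega
        have h2 : (n:ℝ) < 20*((z:ℝ)+1) := by exact_mod_cast h1
        have h3 : (z:ℝ)+1 ≤ (s:ℝ) := by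
          have : z+1 ≤ s := hs.1
          exact_mod_cast this
        linarith
      have hchoose : n.choose s ≤ n.choose s₂ := choose_mono_half n s s₂ hs.2 h2s₂
      have := termIIb hε hβ0 hβ hc₂def hL1 hLdef hpdef hp1 hs1 hsn hzlt hchoose
        hs₂l hs₂n hs₂u hC6
      refine le_trans this (Real.exp_le_exp.mpr ?_)
      linarith [mul_le_mul_of_nonneg_right h2cc₂ hrn0.le]
    calc ∑ s ∈ Finset.Ioc z s₂, F s
        ≤ (Finset.Ioc z s₂).card • Real.exp (-(2*c*(n:ℝ))) :=
          Finset.sum_le_card_nsmul _ _ _ hterm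
      _ = ((Finset.Ioc z s₂).card : ℝ) * Real.exp (-(2*c*(n:ℝ))) := nsmul_eq_mul _ _
      _ ≤ (n:ℝ) * Real.exp (-(2*c*(n:ℝ))) := by
          apply mul_le_mul_of_nonneg_right ?_ (by positivity)
          rw [Nat.card_Ioc]
          have : s₂ - z ≤ n := by omega
          exact_mod_cast this
  -- region III
  have hS4 : ∑ s ∈ Finset.Ioc s₂ n, F s ≤ 2*Real.exp 1*Real.exp (-(ε/4*L)) := by
    have hterm : ∀ s ∈ Finset.Ioc s₂ n, F s
        ≤ (n.choose s:ℝ)/2^n * (2*Real.exp 1*Real.exp (-(ε/4*L))) := by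
      intro s hs
      rw [Finset.mem_Ioc] at hs
      have hsn : s ≤ n := hs.2
      have hsβ : (1+ε/4)*L ≤ (s:ℝ)*p := by
        have h1 : β*(n:ℝ) ≤ (s:ℝ) := by
          have : (s₂:ℝ) ≤ (s:ℝ) := by exact_mod_cast hs.1.le
          linarith
        have h2 : β*(n:ℝ)*((2+ε)*L/(n:ℝ)) ≤ (s:ℝ)*((2+ε)*L/(n:ℝ)) := by
          apply mul_le_mul_of_nonneg_right h1 (by positivity)
        have h3 : β*(n:ℝ)*((2+ε)*L/(n:ℝ)) = β*(2+ε)*L := by field_simp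
        have h4 : β*(2+ε) = 1+ε/4 := by rw [hβdef]; field_simp
        rw [hpdef]
        calc (1+ε/4)*L = β*(2+ε)*L := by rw [h4]
          _ = β*(n:ℝ)*((2+ε)*L/(n:ℝ)) := h3.symm
          _ ≤ (s:ℝ)*((2+ε)*L/(n:ℝ)) := h2
      exact termIII hε hL1 hLdef hpdef hp1 hn1 hsn hsβ
    calc ∑ s ∈ Finset.Ioc s₂ n, F s
        ≤ ∑ s ∈ Finset.Ioc s₂ n, (n.choose s:ℝ)/2^n * (2*Real.exp 1*Real.exp (-(ε/4*L))) :=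
          Finset.sum_le_sum hterm
      _ = (∑ s ∈ Finset.Ioc s₂ n, (n.choose s:ℝ)/2^n) * (2*Real.exp 1*Real.exp (-(ε/4*L))) :=
          (Finset.sum_mul _ _ _).symm
      _ ≤ 1 * (2*Real.exp 1*Real.exp (-(ε/4*L))) := by
          apply mul_le_mul_of_nonneg_right ?_ (by positivity)
          apply sum_choose_le
          intro t ht
          rw [Finset.mem_Ioc] at ht
          rw [Finset.mem_range]
          omega
      _ = 2*Real.exp 1*Real.exp (-(ε/4*L)) := one_mul _
  -- combine
  have hrpow : (n:ℝ) ^ (-(ε/4)) = Real.exp (-(ε/4*L)) := by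
    rw [Real.rpow_def_of_pos hrn0]
    congr 1
    rw [← hLdef]; ring
  have he1 : Real.exp 1 < 2.7182818286 := Real.exp_one_lt_d9
  have hdecay : 3*(n:ℝ)*Real.exp (-(2*c*(n:ℝ))) ≤ 10*Real.exp (-(c*(n:ℝ))) := by
    have h : (n:ℝ) ≤ Real.exp (c*(n:ℝ)) := by
      calc (n:ℝ) = Real.exp L := hexpL.symm
        _ ≤ Real.exp (c*(n:ℝ)) := Real.exp_le_exp.mpr hE7
    have h2 : (n:ℝ)*Real.exp (-(2*c*(n:ℝ))) ≤ Real.exp (-(c*(n:ℝ))) := by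
      calc (n:ℝ)*Real.exp (-(2*c*(n:ℝ))) ≤ Real.exp (c*(n:ℝ))*Real.exp (-(2*c*(n:ℝ))) :=
            mul_le_mul_of_nonneg_right h (Real.exp_pos _).le
        _ = Real.exp (-(c*(n:ℝ))) := by rw [← Real.exp_add]; congr 1; ring
    linarith [h2, Real.exp_pos (-(c*(n:ℝ)))]
  have hX0 : (0:ℝ) ≤ Real.exp (-(ε/4*L)) := (Real.exp_pos _).le
  have he3 : Real.exp 1 ≤ 3 := by linarith
  have hA4 : Real.exp 1 * Real.exp (-(ε/4*L)) ≤ 3 * Real.exp (-(ε/4*L)) :=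
    mul_le_mul_of_nonneg_right he3 hX0
  have hfinal : ∑ s ∈ Finset.Ioc 0 n, F s
      ≤ 10*(n:ℝ)^(-(ε/4)) + 10*Real.exp (-(c*(n:ℝ))) := by
    rw [hrpow]
    linarith [hS1, hS2, hS3, hS4, hsplit1, hsplit2, hsplit3, hdecay, hA4, hX0]
  exact hfinal
end
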